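/- arXiv:2009.09903 — 7 statements merged into one kernel-verified Lean document; each statement's English description precedes it below -/
import Mathlib

section
/- Let H be a weak Hopf algebra over a field k and let C be a k-coalgebra. If a linear map ρ:C→H⊗C, written ρ(c)=c⁽⁻¹⁾⊗c⁽⁰⁾, satisfies axioms (CC1), (CC2) and (CC3), then it automatically satisfies (CC4): for all c∈C, c⁽⁻¹⁾ε_C(c⁽⁰⁾)=ε_t(c⁽⁻¹⁾)ε_C(c⁽⁰⁾). -/
/-
Write `λ(c) = c⁽⁻¹⁾ ε_C(c⁽⁰⁾)`; then (CC4) says `ε_t(λ(c)) = λ(c)`, and both sides equal the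
convolution `λ(c₁) ε_t(λ(c₂))`. By (CC3), `Δ(λ(c)) = c⁽⁻¹⁾ ⊗ λ(c⁽⁰⁾)`, so the antipode axiom gives
`ε_t(λ(c)) = c⁽⁻¹⁾ S(λ(c⁽⁰⁾))`. Applying counits to (CC2) gives the two expansions
`ρ(c) = λ(c₁) c₂⁽⁻¹⁾ ⊗ c₂⁽⁰⁾ = c₁⁽⁻¹⁾ λ(c₂) ⊗ c₁⁽⁰⁾`. The first turns `c⁽⁻¹⁾ S(λ(c⁽⁰⁾))` into
`λ(c₁) ε_t(λ(c₂))`. For the second side, the weak bialgebra identity `a ε_t(b) = ε(a₁ b) a₂`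
together with (CC3) gives `λ(c₁) ε_t(λ(c₂)) = ε(c₁⁽⁻¹⁾ λ(c₂)) λ(c₁⁽⁰⁾)`, which is `λ(c)` by the
second expansion and (CC1).
-/

open TensorProduct

noncomputable section

variable (k : Type*) [Field k]
variable (H : Type*) [Ring H] [Algebra k H] [Coalgebra k H]

/-- `ε_t(h) = ε(1₍₁₎h) 1₍₂₎`, as a linear map. -/
def epsT : H →ₗ[k] H :=
  (TensorProduct.lid k H).toLinearMap
    ∘ₗ TensorProduct.map (Coalgebra.counit : H →ₗ[k] k) (LinearMap.id : H →ₗ[k] H)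
    ∘ₗ LinearMap.mulLeft k (Coalgebra.comul (R := k) (1 : H))
    ∘ₗ (TensorProduct.mk k H H).flip 1

/-- `ε_s(h) = 1₍₁₎ ε(h 1₍₂₎)`, as a linear map. -/
def epsS : H →ₗ[k] H :=
  (TensorProduct.rid k H).toLinearMap
    ∘ₗ TensorProduct.map (LinearMap.id : H →ₗ[k] H) (Coalgebra.counit : H →ₗ[k] k)
    ∘ₗ LinearMap.mulRight k (Coalgebra.comul (R := k) (1 : H))
    ∘ₗ TensorProduct.mk k H H 1

/-- The functional `x ⊗ y ↦ ε(ax) ε(yc)`. -/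
def epsPair (a c : H) : H ⊗[k] H →ₗ[k] k :=
  (TensorProduct.lid k k).toLinearMap
    ∘ₗ TensorProduct.map ((Coalgebra.counit : H →ₗ[k] k) ∘ₗ LinearMap.mulLeft k a)
        ((Coalgebra.counit : H →ₗ[k] k) ∘ₗ LinearMap.mulRight k c)

/-- The functional `x ⊗ y ↦ ε(ay) ε(xc)`. -/
def epsPair' (a c : H) : H ⊗[k] H →ₗ[k] k :=
  (TensorProduct.lid k k).toLinearMap
    ∘ₗ TensorProduct.map ((Coalgebra.counit : H →ₗ[k] k) ∘ₗ LinearMap.mulRight k c)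
        ((Coalgebra.counit : H →ₗ[k] k) ∘ₗ LinearMap.mulLeft k a)

/-- The weak bialgebra axioms for an algebra-and-coalgebra `H`. -/
def IsWeakBialgebra : Prop :=
  (∀ a b : H, Coalgebra.comul (R := k) (a * b) = Coalgebra.comul a * Coalgebra.comul b) ∧
  (∀ a b c : H,
    Coalgebra.counit (R := k) (a * b * c) = epsPair k H a c (Coalgebra.comul b)) ∧
  (∀ a b c : H,
    Coalgebra.counit (R := k) (a * b * c) = epsPair' k H a c (Coalgebra.comul b)) ∧
  (((1 : H) ⊗ₜ[k] Coalgebra.comul (R := k) (1 : H)) *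
      (TensorProduct.assoc k H H H (Coalgebra.comul (R := k) (1 : H) ⊗ₜ[k] (1 : H)))
    = TensorProduct.assoc k H H H
        (TensorProduct.map (Coalgebra.comul (R := k)) (LinearMap.id : H →ₗ[k] H)
          (Coalgebra.comul (R := k) (1 : H)))) ∧
  ((TensorProduct.assoc k H H H (Coalgebra.comul (R := k) (1 : H) ⊗ₜ[k] (1 : H))) *
      ((1 : H) ⊗ₜ[k] Coalgebra.comul (R := k) (1 : H))
    = TensorProduct.assoc k H H H
        (TensorProduct.map (Coalgebra.comul (R := k)) (LinearMap.id : H →ₗ[k] H)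
          (Coalgebra.comul (R := k) (1 : H))))

/-- The weak Hopf algebra axioms: `H` is a weak bialgebra and `S` is an antipode, i.e.
`h₁ S(h₂) = ε_t(h)`, `S(h₁) h₂ = ε_s(h)` and `S(h₁) h₂ S(h₃) = S(h)`. -/
def IsWeakHopfAlgebra (S : H →ₗ[k] H) : Prop :=
  IsWeakBialgebra k H ∧
  (∀ h : H, LinearMap.mul' k H
      (TensorProduct.map (LinearMap.id : H →ₗ[k] H) S (Coalgebra.comul (R := k) h))
    = epsT k H h) ∧
  (∀ h : H, LinearMap.mul' k H
      (TensorProduct.map S (LinearMap.id : H →ₗ[k] H) (Coalgebra.comul (R := k) h))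
    = epsS k H h) ∧
  (∀ h : H, LinearMap.mul' k H
      (TensorProduct.map (LinearMap.mul' k H ∘ₗ TensorProduct.map S (LinearMap.id : H →ₗ[k] H)) S
        (TensorProduct.map (Coalgebra.comul (R := k)) (LinearMap.id : H →ₗ[k] H)
          (Coalgebra.comul (R := k) h)))
    = S h)

variable (C : Type*) [AddCommGroup C] [Module k C] [Coalgebra k C]

/-- `(h ⊗ c) ⊗ (h' ⊗ c') ↦ hh' ⊗ (c ⊗ c')`. -/
def mixHC : (H ⊗[k] C) ⊗[k] (H ⊗[k] C) →ₗ[k] H ⊗[k] (C ⊗[k] C) :=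
  TensorProduct.map (LinearMap.mul' k H) (LinearMap.id : C ⊗[k] C →ₗ[k] C ⊗[k] C)
    ∘ₗ (TensorProduct.tensorTensorTensorComm k H C H C).toLinearMap

/-- (CC1): `ε_H(c⁽⁻¹⁾) c⁽⁰⁾ = c`. -/
def CC1 (ρ : C →ₗ[k] H ⊗[k] C) : Prop :=
  ∀ c : C, TensorProduct.lid k C
    (TensorProduct.map (Coalgebra.counit : H →ₗ[k] k) (LinearMap.id : C →ₗ[k] C) (ρ c)) = c

/-- (CC2): `c⁽⁻¹⁾ ⊗ Δ_C(c⁽⁰⁾) = c₁⁽⁻¹⁾c₂⁽⁻¹⁾ ⊗ c₁⁽⁰⁾ ⊗ c₂⁽⁰⁾`. -/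
def CC2 (ρ : C →ₗ[k] H ⊗[k] C) : Prop :=
  ∀ c : C, TensorProduct.map (LinearMap.id : H →ₗ[k] H) (Coalgebra.comul (R := k)) (ρ c)
    = mixHC k H C (TensorProduct.map ρ ρ (Coalgebra.comul c))

/-- (CC3): `c⁽⁻¹⁾ ⊗ ρ(c⁽⁰⁾) = (c⁽⁻¹⁾)₁ ⊗ (c⁽⁻¹⁾)₂ ⊗ c⁽⁰⁾`. -/
def CC3 (ρ : C →ₗ[k] H ⊗[k] C) : Prop :=
  ∀ c : C, TensorProduct.map (LinearMap.id : H →ₗ[k] H) ρ (ρ c)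
    = TensorProduct.assoc k H H C
        (TensorProduct.map (Coalgebra.comul (R := k)) (LinearMap.id : C →ₗ[k] C) (ρ c))

/-- (CC4): `c⁽⁻¹⁾ ε_C(c⁽⁰⁾) = ε_t(c⁽⁻¹⁾) ε_C(c⁽⁰⁾)`. -/
def CC4 (ρ : C →ₗ[k] H ⊗[k] C) : Prop :=
  ∀ c : C, TensorProduct.rid k H
      (TensorProduct.map (LinearMap.id : H →ₗ[k] H) (Coalgebra.counit : C →ₗ[k] k) (ρ c))
    = TensorProduct.rid k H
      (TensorProduct.map (epsT k H) (Coalgebra.counit : C →ₗ[k] k) (ρ c))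

/-- The right-hand side of (CCP3):
`c ↦ c₁⁽⁻¹⁾ε_C(c₁⁽⁰⁾)(c₂⁽⁻¹⁾)₁ ⊗ (c₂⁽⁻¹⁾)₂ ⊗ c₂⁽⁰⁾`. -/
def ccp3RHS (ρ : C →ₗ[k] H ⊗[k] C) : C →ₗ[k] H ⊗[k] (H ⊗[k] C) :=
  (TensorProduct.assoc k H H C).toLinearMap
  ∘ₗ TensorProduct.map
      (TensorProduct.map (LinearMap.mul' k H) (LinearMap.id : H →ₗ[k] H)
        ∘ₗ (TensorProduct.assoc k H H H).symm.toLinearMap)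
      (LinearMap.id : C →ₗ[k] C)
  ∘ₗ (TensorProduct.assoc k H (H ⊗[k] H) C).symm.toLinearMap
  ∘ₗ TensorProduct.map
      ((TensorProduct.rid k H).toLinearMap
        ∘ₗ TensorProduct.map (LinearMap.id : H →ₗ[k] H) (Coalgebra.counit : C →ₗ[k] k) ∘ₗ ρ)
      (TensorProduct.map (Coalgebra.comul (R := k)) (LinearMap.id : C →ₗ[k] C) ∘ₗ ρ)
  ∘ₗ (Coalgebra.comul (R := k) : C →ₗ[k] C ⊗[k] C)

/-- The right-hand side of the symmetry condition:
`c ↦ (c₁⁽⁻¹⁾)₁c₂⁽⁻¹⁾ε_C(c₂⁽⁰⁾) ⊗ (c₁⁽⁻¹⁾)₂ ⊗ c₁⁽⁰⁾`. -/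
def ccpSymRHS (ρ : C →ₗ[k] H ⊗[k] C) : C →ₗ[k] H ⊗[k] (H ⊗[k] C) :=
  (TensorProduct.assoc k H H C).toLinearMap
  ∘ₗ TensorProduct.map
      (TensorProduct.map (LinearMap.mul' k H ∘ₗ (TensorProduct.comm k H H).toLinearMap)
          (LinearMap.id : H →ₗ[k] H)
        ∘ₗ (TensorProduct.assoc k H H H).symm.toLinearMap)
      (LinearMap.id : C →ₗ[k] C)
  ∘ₗ (TensorProduct.assoc k H (H ⊗[k] H) C).symm.toLinearMap
  ∘ₗ (TensorProduct.comm k ((H ⊗[k] H) ⊗[k] C) H).toLinearMap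
  ∘ₗ TensorProduct.map
      (TensorProduct.map (Coalgebra.comul (R := k)) (LinearMap.id : C →ₗ[k] C) ∘ₗ ρ)
      ((TensorProduct.rid k H).toLinearMap
        ∘ₗ TensorProduct.map (LinearMap.id : H →ₗ[k] H) (Coalgebra.counit : C →ₗ[k] k) ∘ₗ ρ)
  ∘ₗ (Coalgebra.comul (R := k) : C →ₗ[k] C ⊗[k] C)

/-- (CCP3). -/
def CCP3 (ρ : C →ₗ[k] H ⊗[k] C) : Prop :=
  ∀ c : C, TensorProduct.map (LinearMap.id : H →ₗ[k] H) ρ (ρ c) = ccp3RHS k H C ρ c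

/-- The symmetry condition for a partial comodule coalgebra. -/
def CCPSym (ρ : C →ₗ[k] H ⊗[k] C) : Prop :=
  ∀ c : C, TensorProduct.map (LinearMap.id : H →ₗ[k] H) ρ (ρ c) = ccpSymRHS k H C ρ c

/-- `C` is a left `H`-comodule coalgebra via `ρ`. -/
def IsComoduleCoalgebra (ρ : C →ₗ[k] H ⊗[k] C) : Prop :=
  CC1 k H C ρ ∧ CC2 k H C ρ ∧ CC3 k H C ρ ∧ CC4 k H C ρ

/-- `C` is a left partial `H`-comodule coalgebra via `ρ`. -/
def IsPartialComoduleCoalgebra (ρ : C →ₗ[k] H ⊗[k] C) : Prop :=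
  CC1 k H C ρ ∧ CC2 k H C ρ ∧ CCP3 k H C ρ

/-- The smash coproduct `Δ̃(c ⊗ h) = (c₁ ⊗ c₂⁽⁻¹⁾h₁) ⊗ (c₂⁽⁰⁾ ⊗ h₂)`. -/
def smashComul (ρ : C →ₗ[k] H ⊗[k] C) :
    C ⊗[k] H →ₗ[k] (C ⊗[k] H) ⊗[k] (C ⊗[k] H) :=
  TensorProduct.map
      (TensorProduct.map (LinearMap.id : C →ₗ[k] C) (LinearMap.mul' k H)
        ∘ₗ (TensorProduct.assoc k C H H).toLinearMap)
      (LinearMap.id : C ⊗[k] H →ₗ[k] C ⊗[k] H)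
  ∘ₗ (TensorProduct.tensorTensorTensorComm k (C ⊗[k] H) C H H).toLinearMap
  ∘ₗ TensorProduct.map
      ((TensorProduct.assoc k C H C).symm.toLinearMap
        ∘ₗ TensorProduct.map (LinearMap.id : C →ₗ[k] C) ρ
        ∘ₗ (Coalgebra.comul (R := k) : C →ₗ[k] C ⊗[k] C))
      (Coalgebra.comul (R := k) : H →ₗ[k] H ⊗[k] H)

/-- The smash counit `ε̂(c ⊗ h) = ε_C(c⁽⁰⁾) ε_H(c⁽⁻¹⁾h)`. -/
def smashCounit (ρ : C →ₗ[k] H ⊗[k] C) : C ⊗[k] H →ₗ[k] k :=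
  (TensorProduct.lid k k).toLinearMap
  ∘ₗ TensorProduct.map (Coalgebra.counit : C →ₗ[k] k)
      ((Coalgebra.counit : H →ₗ[k] k) ∘ₗ LinearMap.mul' k H)
  ∘ₗ (TensorProduct.assoc k C H H).toLinearMap
  ∘ₗ TensorProduct.map (TensorProduct.comm k H C).toLinearMap (LinearMap.id : H →ₗ[k] H)
  ∘ₗ TensorProduct.map ρ (LinearMap.id : H →ₗ[k] H)

/-- The projection `P(c ⊗ h) = c⁽⁰⁾ ⊗ h₂ ε_H(c⁽⁻¹⁾h₁)` onto the weak smash coproduct. -/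
def smashP (ρ : C →ₗ[k] H ⊗[k] C) : C ⊗[k] H →ₗ[k] C ⊗[k] H :=
  (TensorProduct.lid k (C ⊗[k] H)).toLinearMap
  ∘ₗ TensorProduct.map ((Coalgebra.counit : H →ₗ[k] k) ∘ₗ LinearMap.mul' k H)
      (LinearMap.id : C ⊗[k] H →ₗ[k] C ⊗[k] H)
  ∘ₗ (TensorProduct.tensorTensorTensorComm k H C H H).toLinearMap
  ∘ₗ TensorProduct.map ρ (Coalgebra.comul (R := k) : H →ₗ[k] H ⊗[k] H)

end

namespace TensorProduct

open LinearMap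

variable {R M N P : Type*} [CommSemiring R] [AddCommMonoid M] [AddCommMonoid N]
  [AddCommMonoid P] [Module R M] [Module R N] [Module R P]

lemma rid_lTensor_rTensor (φ : P →ₗ[R] R) (f : M →ₗ[R] N) (x : M ⊗[R] P) :
    TensorProduct.rid R N (lTensor N φ (rTensor P f x))
      = f (TensorProduct.rid R M (lTensor M φ x)) := by
  induction x using TensorProduct.induction_on with
  | zero => simp
  | tmul m p => simp
  | add x y hx hy => simp only [map_add, hx, hy]

lemma rid_map (f : M →ₗ[R] N) (φ : P →ₗ[R] R) (x : M ⊗[R] P) :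
    TensorProduct.rid R N (map f φ x) = f (TensorProduct.rid R M (lTensor M φ x)) := by
  rw [← lTensor_comp_rTensor, comp_apply, rid_lTensor_rTensor]

lemma lid_rTensor_lTensor (φ : P →ₗ[R] R) (f : M →ₗ[R] N) (x : P ⊗[R] M) :
    TensorProduct.lid R N (rTensor N φ (lTensor P f x))
      = f (TensorProduct.lid R M (rTensor M φ x)) := by
  induction x using TensorProduct.induction_on with
  | zero => simp
  | tmul m p => simp
  | add x y hx hy => simp only [map_add, hx, hy]

lemma lTensor_rid_lTensor_assoc (φ : P →ₗ[R] R) (x : (M ⊗[R] N) ⊗[R] P) :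
    lTensor M ((TensorProduct.rid R N).toLinearMap ∘ₗ lTensor N φ) (TensorProduct.assoc R M N P x)
      = TensorProduct.rid R (M ⊗[R] N) (lTensor (M ⊗[R] N) φ x) := by
  induction x using TensorProduct.induction_on with
  | zero => simp
  | tmul mn p =>
    induction mn using TensorProduct.induction_on with
    | zero => simp
    | tmul m n => simp [tmul_smul]
    | add x y hx hy => simp only [add_tmul, map_add, hx, hy]
  | add x y hx hy => simp only [map_add, hx, hy]

lemma assoc_tmul_eq_lTensor (x : M ⊗[R] N) (p : P) :
    TensorProduct.assoc R M N P (x ⊗ₜ p) = lTensor M ((TensorProduct.mk R N P).flip p) x := by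
  induction x using TensorProduct.induction_on with
  | zero => simp
  | tmul m n => simp
  | add x y hx hy => simp [add_tmul, hx, hy]

end TensorProduct

namespace Algebra.TensorProduct

open LinearMap

variable {R A B : Type*} [CommSemiring R] [Semiring A] [Semiring B] [Algebra R A] [Algebra R B]

lemma one_tmul_mul_eq_lTensor (b : B) (x : A ⊗[R] B) :
    ((1 : A) ⊗ₜ[R] b) * x = LinearMap.lTensor A (mulLeft R b) x := by
  induction x using TensorProduct.induction_on with
  | zero => simp
  | tmul a b' => simp
  | add x y hx hy => simp [mul_add, hx, hy]

lemma mul_tmul_one_eq_rTensor (a : A) (x : A ⊗[R] B) :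
    x * (a ⊗ₜ[R] (1 : B)) = LinearMap.rTensor B (mulRight R a) x := by
  induction x using TensorProduct.induction_on with
  | zero => simp
  | tmul a' b => simp
  | add x y hx hy => simp [add_mul, hx, hy]

end Algebra.TensorProduct

namespace LinearMap

variable {R A M : Type*} [CommSemiring R] [Semiring A] [Algebra R A] [AddCommMonoid M]
  [Module R M]

lemma mul'_lTensor_rTensor_mul'_assoc_symm (g : M →ₗ[R] A) (x : A ⊗[R] (A ⊗[R] M)) :
    mul' R A (lTensor A g (rTensor M (mul' R A) ((TensorProduct.assoc R A A M).symm x)))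
      = mul' R A (lTensor A (mul' R A ∘ₗ lTensor A g) x) := by
  induction x using TensorProduct.induction_on with
  | zero => simp
  | tmul a y =>
    induction y using TensorProduct.induction_on with
    | zero => simp
    | tmul b m => simp [mul_assoc]
    | add x y hx hy => simp only [tmul_add, map_add, hx, hy]
  | add x y hx hy => simp only [map_add, hx, hy]

end LinearMap

section WeakBialgebra

open TensorProduct LinearMap Coalgebra

variable (k : Type*) [Field k] {H : Type*} [Ring H] [Algebra k H] [Coalgebra k H]

-- `y ↦ ε(a₁ y) a₂`, built like `epsT`, which is the case `a = 1`.
def twistedEpsT (a : H) : H →ₗ[k] H :=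
  (TensorProduct.lid k H).toLinearMap
    ∘ₗ TensorProduct.map (Coalgebra.counit : H →ₗ[k] k) (LinearMap.id : H →ₗ[k] H)
    ∘ₗ LinearMap.mulLeft k (Coalgebra.comul (R := k) a)
    ∘ₗ (TensorProduct.mk k H H).flip 1

lemma twistedEpsT_one : twistedEpsT k (1 : H) = epsT k H := rfl

variable {k}

lemma twistedEpsT_apply (a y : H) :
    twistedEpsT k a y
      = TensorProduct.lid k H (rTensor H (counit ∘ₗ mulRight k y) (comul a)) := by
  simp [twistedEpsT, Algebra.TensorProduct.mul_tmul_one_eq_rTensor]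
  rfl

-- Both sides come from `(1 ⊗ Δa)(Δ1 ⊗ 1)`, rewritten as `1₁ ⊗ Δ(a1₂)` by axiom (iii).
lemma lTensor_twistedEpsT_comul_one (hH : IsWeakBialgebra k H) (a : H) :
    lTensor H (twistedEpsT k a) (comul 1) = lTensor H (mulLeft k a) (comul 1) := by
  obtain ⟨hmul, -, -, hunit, -⟩ := hH
  have hcomul : mulLeft k (comul a) ∘ₗ comul = comul ∘ₗ mulLeft k a := by
    ext y; simp [hmul]
  have hiii : ((1 : H) ⊗ₜ[k] comul a) * TensorProduct.assoc k H H H (comul 1 ⊗ₜ[k] (1 : H))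
      = lTensor H (comul ∘ₗ mulLeft k a) (comul 1) := calc
    _ = ((1 : H) ⊗ₜ[k] comul a) * ((1 : H) ⊗ₜ[k] comul 1)
          * TensorProduct.assoc k H H H (comul 1 ⊗ₜ[k] (1 : H)) := by
      rw [Algebra.TensorProduct.tmul_mul_tmul, one_mul, ← hmul, mul_one]
    _ = ((1 : H) ⊗ₜ[k] comul a) * lTensor H comul (comul 1) := by
      rw [mul_assoc, hunit]; exact congrArg _ (coassoc_apply 1)
    _ = lTensor H (comul ∘ₗ mulLeft k a) (comul 1) := by
      rw [Algebra.TensorProduct.one_tmul_mul_eq_lTensor, ← lTensor_comp_apply, hcomul]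
  have := congrArg (lTensor H ((TensorProduct.lid k H).toLinearMap ∘ₗ rTensor H counit)) hiii
  rw [TensorProduct.assoc_tmul_eq_lTensor, Algebra.TensorProduct.one_tmul_mul_eq_lTensor,
    ← lTensor_comp_apply, ← lTensor_comp_apply, ← lTensor_comp_apply] at this
  have hcounit : ((TensorProduct.lid k H).toLinearMap ∘ₗ rTensor H counit) ∘ₗ comul ∘ₗ mulLeft k a
      = mulLeft k a := by
    ext y; simp
  rwa [hcounit] at this

lemma twistedEpsT_eq_mul_epsT (hH : IsWeakBialgebra k H) (a b : H) :
    twistedEpsT k a b = a * epsT k H b := by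
  set G : H ⊗[k] H →ₗ[k] H :=
    (TensorProduct.lid k H).toLinearMap ∘ₗ rTensor H (counit ∘ₗ mulRight k b)
  have hG : ∀ w, G (lTensor H (mulLeft k a) w) = a * G w := by
    intro w
    induction w using TensorProduct.induction_on with
    | zero => simp
    | tmul u v => simp [G]
    | add x y hx hy => simp only [map_add, hx, hy, mul_add]
  have hepsT : epsT k H b = G (comul 1) := by
    rw [← twistedEpsT_one, twistedEpsT_apply]; rfl
  -- By (ii), `ε(a₁ b) a₂ = ε(1₁ b) ε(a₁ 1₂) a₂`, and `1₁ ⊗ ε(a₁ 1₂) a₂ = 1₁ ⊗ a 1₂`.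
  rw [hepsT, ← hG, ← lTensor_twistedEpsT_comul_one hH]
  obtain ⟨-, -, hpair', -, -⟩ := hH
  let 𝓡 := ℛ k a
  have hsum : ∀ y,
      twistedEpsT k a y = ∑ i ∈ 𝓡.index, counit (R := k) (𝓡.left i * y) • 𝓡.right i := by
    intro y
    simp [twistedEpsT_apply, ← 𝓡.eq, map_sum]
  have hGsum : ∀ w, G (lTensor H (twistedEpsT k a) w)
      = ∑ i ∈ 𝓡.index, epsPair' k H (𝓡.left i) b w • 𝓡.right i := by
    intro w
    induction w using TensorProduct.induction_on with
    | zero => simp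
    | tmul u v => simp [G, hsum, epsPair', Finset.smul_sum, smul_smul]
    | add x y hx hy => simp only [map_add, hx, hy, add_smul, Finset.sum_add_distrib]
  simp_rw [hGsum, hsum, ← hpair', mul_one]

end WeakBialgebra

section ComoduleCoalgebra

open TensorProduct LinearMap Coalgebra

variable {k : Type*} [Field k] {H : Type*} [Ring H] [Algebra k H]
  {C : Type*} [AddCommGroup C] [Module k C] [Coalgebra k C]

lemma lTensor_lid_rTensor_counit_comp_mixHC :
    lTensor H ((TensorProduct.lid k C).toLinearMap ∘ₗ rTensor C counit) ∘ₗ mixHC k H C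
      = rTensor C (mul' k H) ∘ₗ (TensorProduct.assoc k H H C).symm.toLinearMap
        ∘ₗ rTensor (H ⊗[k] C) ((TensorProduct.rid k H).toLinearMap ∘ₗ lTensor H counit) := by
  ext; simp [mixHC, smul_tmul']

lemma lTensor_rid_lTensor_counit_comp_mixHC :
    lTensor H ((TensorProduct.rid k C).toLinearMap ∘ₗ lTensor C counit) ∘ₗ mixHC k H C
      = rTensor C (mul' k H) ∘ₗ (TensorProduct.rightComm k H C H).toLinearMap
        ∘ₗ lTensor (H ⊗[k] C) ((TensorProduct.rid k H).toLinearMap ∘ₗ lTensor H counit) := by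
  ext; simp [mixHC, smul_tmul']

variable (ρ : C →ₗ[k] H ⊗[k] C)

-- `c ↦ c⁽⁻¹⁾ ε_C(c⁽⁰⁾)`
def coactCounit : C →ₗ[k] H :=
  (TensorProduct.rid k H).toLinearMap ∘ₗ lTensor H counit ∘ₗ ρ

lemma coact_eq_coactCounit_mul (h2 : CC2 k H C ρ) (c : C) :
    ρ c = rTensor C (mul' k H)
      ((TensorProduct.assoc k H H C).symm (map (coactCounit ρ) ρ (comul c))) := by
  have := congrArg (lTensor H ((TensorProduct.lid k C).toLinearMap ∘ₗ rTensor C counit)) (h2 c)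
  have hcounit : ((TensorProduct.lid k C).toLinearMap ∘ₗ rTensor C counit) ∘ₗ comul
      = LinearMap.id := by
    ext; simp
  rw [lTensor_map, hcounit, map_id, id_apply, ← comp_apply (lTensor H _),
    lTensor_lid_rTensor_counit_comp_mixHC] at this
  simp only [comp_apply, LinearEquiv.coe_coe, rTensor_map] at this
  exact this

lemma coact_eq_mul_coactCounit (h2 : CC2 k H C ρ) (c : C) :
    ρ c = rTensor C (mul' k H)
      (TensorProduct.rightComm k H C H (map ρ (coactCounit ρ) (comul c))) := by
  have := congrArg (lTensor H ((TensorProduct.rid k C).toLinearMap ∘ₗ lTensor C counit)) (h2 c)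
  have hcounit : ((TensorProduct.rid k C).toLinearMap ∘ₗ lTensor C counit) ∘ₗ comul
      = LinearMap.id := by
    ext; simp
  rw [lTensor_map, hcounit, map_id, id_apply, ← comp_apply (lTensor H _),
    lTensor_rid_lTensor_counit_comp_mixHC] at this
  simp only [comp_apply, LinearEquiv.coe_coe, lTensor_map] at this
  exact this

variable [Coalgebra k H]

lemma comul_coactCounit (h3 : CC3 k H C ρ) (c : C) :
    comul (coactCounit ρ c) = lTensor H (coactCounit ρ) (ρ c) := by
  have := congrArg (lTensor H ((TensorProduct.rid k H).toLinearMap ∘ₗ lTensor H counit)) (h3 c)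
  rw [lTensor_map, lTensor_rid_lTensor_assoc] at this
  exact (this.trans (rid_lTensor_rTensor counit comul (ρ c))).symm

lemma epsT_coactCounit_eq_convolution (S : H →ₗ[k] H)
    (hS : ∀ h : H, mul' k H (map LinearMap.id S (comul h)) = epsT k H h)
    (h2 : CC2 k H C ρ) (h3 : CC3 k H C ρ) (c : C) :
    epsT k H (coactCounit ρ c)
      = mul' k H (map (coactCounit ρ) (epsT k H ∘ₗ coactCounit ρ) (comul c)) := by
  have hantipode : epsT k H ∘ₗ coactCounit ρ
      = mul' k H ∘ₗ lTensor H (S ∘ₗ coactCounit ρ) ∘ₗ ρ := by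
    ext y
    rw [comp_apply, ← hS, comul_coactCounit ρ h3, map_lTensor]
    rfl
  calc epsT k H (coactCounit ρ c)
      = mul' k H (lTensor H (S ∘ₗ coactCounit ρ) (ρ c)) := LinearMap.congr_fun hantipode c
    _ = mul' k H (map (coactCounit ρ) (mul' k H ∘ₗ lTensor H (S ∘ₗ coactCounit ρ) ∘ₗ ρ)
          (comul c)) := by
      rw [coact_eq_coactCounit_mul ρ h2 c, mul'_lTensor_rTensor_mul'_assoc_symm, lTensor_map]
      rfl
    _ = mul' k H (map (coactCounit ρ) (epsT k H ∘ₗ coactCounit ρ) (comul c)) := by rw [hantipode]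

lemma coactCounit_eq_convolution (hH : IsWeakBialgebra k H)
    (h1 : CC1 k H C ρ) (h2 : CC2 k H C ρ) (h3 : CC3 k H C ρ) (c : C) :
    coactCounit ρ c = mul' k H (map (coactCounit ρ) (epsT k H ∘ₗ coactCounit ρ) (comul c)) := by
  set Λ := coactCounit ρ
  have hsummand : ∀ x y, Λ x * epsT k H (Λ y) = Λ (TensorProduct.lid k C (rTensor C counit
      (rTensor C (mul' k H) (TensorProduct.rightComm k H C H (ρ x ⊗ₜ Λ y))))) := by
    intro x y
    rw [← twistedEpsT_eq_mul_epsT hH, twistedEpsT_apply, comul_coactCounit ρ h3,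
      lid_rTensor_lTensor]
    congr 1
    induction ρ x using TensorProduct.induction_on with
    | zero => simp
    | tmul h d => simp
    | add u v hu hv => simp only [add_tmul, map_add, hu, hv]
  have hconv : mul' k H ∘ₗ map Λ (epsT k H ∘ₗ Λ)
      = Λ ∘ₗ (TensorProduct.lid k C).toLinearMap ∘ₗ rTensor C counit ∘ₗ rTensor C (mul' k H)
        ∘ₗ (TensorProduct.rightComm k H C H).toLinearMap ∘ₗ map ρ Λ := by
    refine TensorProduct.ext' fun x y => ?_
    simp only [comp_apply, map_tmul, mul'_apply, LinearEquiv.coe_coe]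
    exact hsummand x y
  calc Λ c = Λ (TensorProduct.lid k C (rTensor C counit (ρ c))) := congrArg Λ (h1 c).symm
    _ = Λ (TensorProduct.lid k C (rTensor C counit
          (rTensor C (mul' k H) (TensorProduct.rightComm k H C H (map ρ Λ (comul c)))))) := by
      rw [← coact_eq_mul_coactCounit ρ h2 c]
    _ = mul' k H (map Λ (epsT k H ∘ₗ Λ) (comul c)) := (LinearMap.congr_fun hconv (comul c)).symm

end ComoduleCoalgebra

noncomputable section
variable (k : Type*) [Field k]
variable (H : Type*) [Ring H] [Algebra k H] [Coalgebra k H]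
variable (C : Type*) [AddCommGroup C] [Module k C] [Coalgebra k C]

/-- If `H` is a weak Hopf algebra and `ρ : C → H ⊗ C` satisfies (CC1)-(CC3), then (CC4) holds. -/
theorem cc4_of_cc1_cc2_cc3 (S : H →ₗ[k] H) (hH : IsWeakHopfAlgebra k H S)
    (ρ : C →ₗ[k] H ⊗[k] C) (h1 : CC1 k H C ρ) (h2 : CC2 k H C ρ) (h3 : CC3 k H C ρ) :
    CC4 k H C ρ := by
  obtain ⟨hbialg, hS, -, -⟩ := hH
  intro c
  rw [TensorProduct.rid_map, TensorProduct.rid_map, LinearMap.id_apply]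
  change coactCounit ρ c = epsT k H (coactCounit ρ c)
  rw [epsT_coactCounit_eq_convolution ρ S hS h2 h3]
  exact coactCounit_eq_convolution ρ hbialg h1 h2 h3 c

end
end

section
/- Let H be a weak Hopf algebra over a field k and let C be a left partial H-comodule coalgebra via ρ (i.e. ρ satisfies (CCP1)–(CCP3)). Then ρ makes C a (global) left H-comodule coalgebra, i.e. ρ additionally satisfies (CC3) and (CC4), if and only if c⁽⁻¹⁾ε_C(c⁽⁰⁾)=ε_t(c⁽⁻¹⁾)ε_C(c⁽⁰⁾) for all c∈C. -/
open TensorProduct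

/-! An element `z` of the target subalgebra `ε_t(H)` satisfies `Δ(z h) = (z ⊗ 1) Δ(h)`, because
the weak bialgebra axiom `(Δ ⊗ id)Δ(1) = (Δ(1) ⊗ 1)(1 ⊗ Δ(1))` gives
`Δ(ε_t(g)) = (ε_t(g) ⊗ 1) Δ(1)`. Condition (CC4) says that `c⁽⁻¹⁾ ε_C(c⁽⁰⁾)` is fixed by `ε_t`.
So the right-hand side of (CCP3) is `Δ(c₁⁽⁻¹⁾ ε_C(c₁⁽⁰⁾) c₂⁽⁻¹⁾) ⊗ c₂⁽⁰⁾`, and by (CC2) and the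
counit law `c₁⁽⁻¹⁾ ε_C(c₁⁽⁰⁾) c₂⁽⁻¹⁾ ⊗ c₂⁽⁰⁾ = ρ(c)`; this is (CC3). -/

section

open LinearMap

theorem lid_rTensor_assoc_mul {R A : Type*} [CommSemiring R] [Semiring A] [Algebra R A]
    (φ : A →ₗ[R] R) (u v : A ⊗[R] A) :
    TensorProduct.lid R (A ⊗[R] A)
        (rTensor (A ⊗[R] A) φ (TensorProduct.assoc R A A A (u ⊗ₜ 1) * (1 ⊗ₜ v)))
      = (TensorProduct.lid R A (rTensor A φ u) ⊗ₜ 1) * v := by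
  induction u using TensorProduct.induction_on with
  | zero => simp
  | tmul a b =>
    induction v using TensorProduct.induction_on with
    | zero => simp
    | tmul p q => simp [smul_tmul']
    | add x y hx hy => simp only [tmul_add, mul_add, map_add, hx, hy]
  | add x y hx hy => simp only [add_tmul, map_add, add_mul, hx, hy]

variable {k H C : Type*} [Field k] [Ring H] [Algebra k H]
  [AddCommGroup C] [Module k C] [Coalgebra k C]

theorem lTensor_lid_counit_mixHC_tmul (w₁ w₂ : H ⊗[k] C) :
    lTensor H ((TensorProduct.lid k C).toLinearMap ∘ₗ rTensor C Coalgebra.counit)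
        (mixHC k H C (w₁ ⊗ₜ w₂))
      = TensorProduct.rid k H (lTensor H Coalgebra.counit w₁) • w₂ := by
  induction w₁ using TensorProduct.induction_on with
  | zero => simp
  | tmul a u =>
    induction w₂ using TensorProduct.induction_on with
    | zero => simp
    | tmul b v => simp [mixHC, smul_tmul', tmul_smul]
    | add x y hx hy => simp only [tmul_add, map_add, smul_add, hx, hy]
  | add x y hx hy => simp only [add_tmul, map_add, add_smul, hx, hy]

def coactionCounit (ρ : C →ₗ[k] H ⊗[k] C) : C →ₗ[k] H :=
  (TensorProduct.rid k H).toLinearMap ∘ₗ lTensor H Coalgebra.counit ∘ₗ ρ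

theorem CC2.apply_eq_lift (ρ : C →ₗ[k] H ⊗[k] C) (h2 : CC2 k H C ρ) (c : C) :
    ρ c = lift ((Algebra.lsmul k k (H ⊗[k] C)).toLinearMap.compl₁₂ (coactionCounit ρ) ρ)
      (Coalgebra.comul c) := by
  set counitLeft :=
    lTensor H ((TensorProduct.lid k C).toLinearMap ∘ₗ rTensor C (Coalgebra.counit : C →ₗ[k] k))
  have counitLeft_comul : counitLeft ∘ₗ lTensor H Coalgebra.comul = LinearMap.id := by
    rw [← lTensor_comp, LinearMap.comp_assoc, Coalgebra.rTensor_counit_comp_comul]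
    ext
    simp
  calc ρ c = counitLeft (lTensor H Coalgebra.comul (ρ c)) := by
        rw [← LinearMap.comp_apply, counitLeft_comul, LinearMap.id_apply]
    _ = counitLeft (mixHC k H C (map ρ ρ (Coalgebra.comul c))) := congrArg counitLeft (h2 c)
    _ = _ := by
      induction (Coalgebra.comul c : C ⊗[k] C) using TensorProduct.induction_on with
      | zero => simp
      | tmul x y => simp [counitLeft, lTensor_lid_counit_mixHC_tmul, coactionCounit]
      | add x y hx hy => simp only [map_add, hx, hy]

variable [Coalgebra k H]

theorem epsT_eq_lid_rTensor (g : H) :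
    epsT k H g = TensorProduct.lid k H
      (rTensor H (Coalgebra.counit ∘ₗ mulRight k g) (Coalgebra.comul 1)) := by
  suffices ∀ u : H ⊗[k] H, TensorProduct.lid k H (rTensor H Coalgebra.counit (u * (g ⊗ₜ 1))) =
      TensorProduct.lid k H (rTensor H (Coalgebra.counit ∘ₗ mulRight k g) u) from this _
  intro u
  induction u using TensorProduct.induction_on with
  | zero => simp
  | tmul a b => simp
  | add x y hx hy => simp only [add_mul, map_add, hx, hy]

namespace IsWeakBialgebra

theorem lTensor_comul_comul_one (hH : IsWeakBialgebra k H) :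
    lTensor H (Coalgebra.comul (R := k)) (Coalgebra.comul (1 : H))
      = TensorProduct.assoc k H H H (Coalgebra.comul (R := k) (1 : H) ⊗ₜ[k] (1 : H))
        * ((1 : H) ⊗ₜ[k] Coalgebra.comul (R := k) (1 : H)) := by
  obtain ⟨-, -, -, -, comul_comul_one⟩ := hH
  rw [comul_comul_one, ← Coalgebra.coassoc_apply]
  rfl

theorem comul_epsT (hH : IsWeakBialgebra k H) (g : H) :
    Coalgebra.comul (R := k) (epsT k H g) = (epsT k H g ⊗ₜ 1) * Coalgebra.comul (1 : H) := by
  have comul_lid_rTensor (φ : H →ₗ[k] k) (u : H ⊗[k] H) :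
      Coalgebra.comul (R := k) (TensorProduct.lid k H (rTensor H φ u))
        = TensorProduct.lid k (H ⊗[k] H)
            (rTensor (H ⊗[k] H) φ (lTensor H (Coalgebra.comul (R := k)) u)) := by
    induction u using TensorProduct.induction_on with
    | zero => simp
    | tmul a b => simp
    | add x y hx hy => simp only [map_add, hx, hy]
  rw [epsT_eq_lid_rTensor, comul_lid_rTensor, hH.lTensor_comul_comul_one, lid_rTensor_assoc_mul,
    ← epsT_eq_lid_rTensor]

variable {M : Type*} [AddCommGroup M] [Module k M]

theorem rTensor_comul_smul (hH : IsWeakBialgebra k H) (h : H) (w : H ⊗[k] M) :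
    rTensor M (Coalgebra.comul (R := k)) (h • w)
      = Coalgebra.comul (R := k) h • rTensor M (Coalgebra.comul (R := k)) w := by
  obtain ⟨comul_mul, -⟩ := hH
  induction w using TensorProduct.induction_on with
  | zero => simp
  | tmul a m => simp [smul_tmul', comul_mul]
  | add x y hx hy => simp only [smul_add, map_add, hx, hy]

theorem rTensor_comul_epsT_smul (hH : IsWeakBialgebra k H) (g : H) (w : H ⊗[k] M) :
    rTensor M (Coalgebra.comul (R := k)) (epsT k H g • w)
      = (epsT k H g ⊗ₜ[k] (1 : H)) • rTensor M (Coalgebra.comul (R := k)) w := by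
  rw [hH.rTensor_comul_smul, hH.comul_epsT, mul_smul, ← hH.rTensor_comul_smul, one_smul]

end IsWeakBialgebra

theorem cc4_iff_epsT_coactionCounit (ρ : C →ₗ[k] H ⊗[k] C) :
    CC4 k H C ρ ↔ ∀ c, coactionCounit ρ c = epsT k H (coactionCounit ρ c) := by
  have rid_map_epsT (w : H ⊗[k] C) :
      TensorProduct.rid k H (map (epsT k H) Coalgebra.counit w)
        = epsT k H (TensorProduct.rid k H (lTensor H Coalgebra.counit w)) := by
    induction w using TensorProduct.induction_on with
    | zero => simp
    | tmul a u => simp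
    | add x y hx hy => simp only [map_add, hx, hy]
  exact forall_congr' fun c => by rw [rid_map_epsT]; rfl

theorem ccp3RHS_apply (ρ : C →ₗ[k] H ⊗[k] C) (c : C) :
    ccp3RHS k H C ρ c = TensorProduct.assoc k H H C
      (lift ((Algebra.lsmul k k ((H ⊗[k] H) ⊗[k] C)).toLinearMap.compl₁₂
        ((Algebra.TensorProduct.includeLeft : H →ₐ[k] H ⊗[k] H).toLinearMap ∘ₗ coactionCounit ρ)
        (rTensor C Coalgebra.comul ∘ₗ ρ)) (Coalgebra.comul c)) := by
  have mul_assoc_left (h : H) (p : (H ⊗[k] H) ⊗[k] C) :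
      map (map (LinearMap.mul' k H) LinearMap.id ∘ₗ (TensorProduct.assoc k H H H).symm.toLinearMap)
        LinearMap.id ((TensorProduct.assoc k H (H ⊗[k] H) C).symm (h ⊗ₜ p))
        = (h ⊗ₜ[k] (1 : H)) • p := by
    induction p using TensorProduct.induction_on with
    | zero => simp
    | tmul q u =>
      induction q using TensorProduct.induction_on with
      | zero => simp
      | tmul a b => simp [smul_tmul']
      | add x y hx hy => simp only [add_tmul, tmul_add, map_add, smul_add, hx, hy]
    | add x y hx hy => simp only [tmul_add, map_add, smul_add, hx, hy]
  simp only [ccp3RHS, LinearMap.coe_comp, LinearEquiv.coe_coe, Function.comp_apply]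
  congr 1
  induction (Coalgebra.comul c : C ⊗[k] C) using TensorProduct.induction_on with
  | zero => simp
  | tmul x y => exact mul_assoc_left _ _
  | add x y hx hy => simp only [map_add, hx, hy]

theorem rTensor_comul_comp_lift_of_cc4 (hH : IsWeakBialgebra k H) (ρ : C →ₗ[k] H ⊗[k] C)
    (h4 : CC4 k H C ρ) :
    rTensor C Coalgebra.comul ∘ₗ
        lift ((Algebra.lsmul k k (H ⊗[k] C)).toLinearMap.compl₁₂ (coactionCounit ρ) ρ)
      = lift ((Algebra.lsmul k k ((H ⊗[k] H) ⊗[k] C)).toLinearMap.compl₁₂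
        ((Algebra.TensorProduct.includeLeft : H →ₐ[k] H ⊗[k] H).toLinearMap ∘ₗ coactionCounit ρ)
        (rTensor C Coalgebra.comul ∘ₗ ρ)) := by
  refine TensorProduct.ext' fun x y => ?_
  show rTensor C Coalgebra.comul (coactionCounit ρ x • ρ y)
    = (coactionCounit ρ x ⊗ₜ[k] (1 : H)) • rTensor C Coalgebra.comul (ρ y)
  rw [(cc4_iff_epsT_coactionCounit ρ).1 h4 x]
  exact hH.rTensor_comul_epsT_smul _ _

end

noncomputable section
variable (k : Type*) [Field k]
variable (H : Type*) [Ring H] [Algebra k H] [Coalgebra k H]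
variable (C : Type*) [AddCommGroup C] [Module k C] [Coalgebra k C]

/-- A left partial `H`-comodule coalgebra is a (global) left `H`-comodule coalgebra iff
`c⁽⁻¹⁾ ε_C(c⁽⁰⁾) = ε_t(c⁽⁻¹⁾) ε_C(c⁽⁰⁾)` for all `c`. -/
theorem partial_is_global_iff (S : H →ₗ[k] H) (hH : IsWeakHopfAlgebra k H S)
    (ρ : C →ₗ[k] H ⊗[k] C) (hρ : IsPartialComoduleCoalgebra k H C ρ) :
    IsComoduleCoalgebra k H C ρ ↔
      ∀ c : C,
        TensorProduct.rid k H
            (TensorProduct.map (LinearMap.id : H →ₗ[k] H) (Coalgebra.counit : C →ₗ[k] k) (ρ c))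
          = TensorProduct.rid k H
            (TensorProduct.map (epsT k H) (Coalgebra.counit : C →ₗ[k] k) (ρ c)) := by
  obtain ⟨h1, h2, h3⟩ := hρ
  refine ⟨fun h => h.2.2.2, fun h4 => ⟨h1, h2, fun c => ?_, h4⟩⟩
  rw [h3 c, ccp3RHS_apply, ← rTensor_comul_comp_lift_of_cc4 hH.1 ρ h4, LinearMap.comp_apply,
    ← h2.apply_eq_lift]
  rfl

end
end

section
/- Let H be a weak Hopf algebra over a field k, let C be a nonzero k-coalgebra, and let h∈H. The linear map ρ_h:C→H⊗C defined by ρ_h(c)=h⊗c makes C a symmetric left partial H-comodule coalgebra if and only if ε_H(h)=1, (h⊗1)Δ_H(h)=h⊗h, and Δ_H(h)(h⊗1)=h⊗h. -/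
/-!
Since `ρ_h(c) = h ⊗ c` does not touch `c`, every axiom for `ρ_h`, evaluated at a nonzero `c`,
is an identity in `H` (over a field, `x ⊗ c = y ⊗ c` forces `x = y`): (CCP1) becomes `ε(h) = 1`,
(CCP3) and the symmetry condition become `(h ⊗ 1)Δ(h) = h ⊗ h` and `Δ(h)(h ⊗ 1) = h ⊗ h`, and
(CCP2) becomes `h² = h`, which follows from `(h ⊗ 1)Δ(h) = h ⊗ h` by applying `id ⊗ ε`.
-/

open TensorProduct

theorem TensorProduct.tmul_left_injective_of_ne_zero {K M N : Type*} [Field K]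
    [AddCommGroup M] [Module K M] [AddCommGroup N] [Module K N] {n : N} (hn : n ≠ 0) :
    Function.Injective (fun m : M => m ⊗ₜ[K] n) := by
  intro x y hxy
  obtain ⟨φ, hφ⟩ : ∃ φ : Module.Dual K N, φ n ≠ 0 := by
    by_contra! hφ
    exact hn ((Module.forall_dual_apply_eq_zero_iff K n).mp hφ)
  have := congrArg (fun t => TensorProduct.rid K M (φ.lTensor M t)) hxy
  simp only [LinearMap.lTensor_tmul, TensorProduct.rid_tmul] at this
  exact smul_right_injective M hφ this

section

variable {R A : Type*} [CommSemiring R] [Semiring A] [Algebra R A]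

theorem TensorProduct.map_mul'_assoc_symm_tmul (a : A) (X : A ⊗[R] A) :
    TensorProduct.map (LinearMap.mul' R A) LinearMap.id
      ((TensorProduct.assoc R A A A).symm (a ⊗ₜ X)) = (a ⊗ₜ (1 : A)) * X := by
  induction X using TensorProduct.induction_on with
  | zero => simp
  | tmul x y => simp
  | add u v hu hv => simp only [tmul_add, map_add, mul_add, hu, hv]

theorem TensorProduct.map_mul'_comm_assoc_symm_tmul (a : A) (X : A ⊗[R] A) :
    TensorProduct.map (LinearMap.mul' R A ∘ₗ (TensorProduct.comm R A A).toLinearMap)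
        LinearMap.id ((TensorProduct.assoc R A A A).symm (a ⊗ₜ X)) = X * (a ⊗ₜ (1 : A)) := by
  induction X using TensorProduct.induction_on with
  | zero => simp
  | tmul x y => simp
  | add u v hu hv => simp only [tmul_add, map_add, add_mul, hu, hv]

theorem TensorProduct.rid_lTensor_tmul_one_mul (φ : A →ₗ[R] R) (a : A) (X : A ⊗[R] A) :
    TensorProduct.rid R A (φ.lTensor A ((a ⊗ₜ (1 : A)) * X))
      = a * TensorProduct.rid R A (φ.lTensor A X) := by
  induction X using TensorProduct.induction_on with
  | zero => simp
  | tmul x y => simp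
  | add u v hu hv => simp only [mul_add, map_add, hu, hv]

theorem mul_self_eq_counit_smul_of_tmul_one_mul_comul [Coalgebra R A] {h : A}
    (hh : (h ⊗ₜ[R] (1 : A)) * Coalgebra.comul h = h ⊗ₜ h) :
    h * h = Coalgebra.counit (R := R) h • h := calc
  h * h = h * TensorProduct.rid R A (Coalgebra.counit.lTensor A (Coalgebra.comul h)) := by
    rw [Coalgebra.lTensor_counit_comul, TensorProduct.rid_tmul, one_smul]
  _ = TensorProduct.rid R A (Coalgebra.counit.lTensor A (h ⊗ₜ h)) := by
    rw [← TensorProduct.rid_lTensor_tmul_one_mul, hh]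
  _ = Coalgebra.counit (R := R) h • h := by
    rw [LinearMap.lTensor_tmul, TensorProduct.rid_tmul]

end

section ConstantCoaction

variable {k : Type*} [Field k] {H : Type*} [Ring H] [Algebra k H]
  {C : Type*} [AddCommGroup C] [Module k C]

theorem mixHC_map_mk_mk (h : H) (t : C ⊗[k] C) :
    mixHC k H C (TensorProduct.map (TensorProduct.mk k H C h) (TensorProduct.mk k H C h) t)
      = (h * h) ⊗ₜ t := by
  induction t using TensorProduct.induction_on with
  | zero => simp
  | tmul x y => simp [mixHC]
  | add u v hu hv => simp only [tmul_add, map_add, hu, hv]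

theorem cc1_mk_iff [Coalgebra k H] [Nontrivial C] (h : H) :
    CC1 k H C (TensorProduct.mk k H C h) ↔ Coalgebra.counit (R := k) h = 1 := by
  obtain ⟨c, hc⟩ := exists_ne (0 : C)
  simp only [CC1, TensorProduct.mk_apply, TensorProduct.map_tmul, TensorProduct.lid_tmul,
    LinearMap.id_coe, id_eq]
  refine ⟨fun h1 => ?_, fun h1 c => by rw [h1, one_smul]⟩
  exact (smul_left_injective k hc) ((h1 c).trans (one_smul k c).symm)

theorem cc2_mk_of_mul_self_eq [Coalgebra k C] {h : H} (hh : h * h = h) :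
    CC2 k H C (TensorProduct.mk k H C h) := by
  intro c
  rw [mixHC_map_mk_mk, hh]
  rfl

variable [Coalgebra k H] [Coalgebra k C]

theorem ccp3RHS_mk_apply (h : H) (c : C) :
    ccp3RHS k H C (TensorProduct.mk k H C h) c
      = TensorProduct.assoc k H H C (((h ⊗ₜ[k] (1 : H)) * Coalgebra.comul h) ⊗ₜ c) := by
  have hmaps : ccp3RHS k H C (TensorProduct.mk k H C h) =
      (TensorProduct.assoc k H H C).toLinearMap ∘ₗ
        (TensorProduct.mk k (H ⊗[k] H) C ((h ⊗ₜ[k] (1 : H)) * Coalgebra.comul h)) ∘ₗ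
        (TensorProduct.lid k C).toLinearMap ∘ₗ Coalgebra.counit.rTensor C ∘ₗ Coalgebra.comul := by
    simp only [ccp3RHS, ← LinearMap.comp_assoc]
    congr 1
    ext x y
    simp [TensorProduct.map_mul'_assoc_symm_tmul, ← TensorProduct.smul_tmul']
  rw [hmaps]
  simp [Coalgebra.rTensor_counit_comul]

theorem ccpSymRHS_mk_apply (h : H) (c : C) :
    ccpSymRHS k H C (TensorProduct.mk k H C h) c
      = TensorProduct.assoc k H H C ((Coalgebra.comul h * (h ⊗ₜ[k] (1 : H))) ⊗ₜ c) := by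
  have hmaps : ccpSymRHS k H C (TensorProduct.mk k H C h) =
      (TensorProduct.assoc k H H C).toLinearMap ∘ₗ
        (TensorProduct.mk k (H ⊗[k] H) C (Coalgebra.comul h * (h ⊗ₜ[k] (1 : H)))) ∘ₗ
        (TensorProduct.rid k C).toLinearMap ∘ₗ Coalgebra.counit.lTensor C ∘ₗ Coalgebra.comul := by
    simp only [ccpSymRHS, ← LinearMap.comp_assoc]
    congr 1
    ext x y
    simp [TensorProduct.map_mul'_comm_assoc_symm_tmul]
  rw [hmaps]
  simp [Coalgebra.lTensor_counit_comul]

theorem ccp3_mk_iff [Nontrivial C] (h : H) :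
    CCP3 k H C (TensorProduct.mk k H C h) ↔
      (h ⊗ₜ[k] (1 : H)) * Coalgebra.comul h = h ⊗ₜ h := by
  obtain ⟨c, hc⟩ := exists_ne (0 : C)
  simp only [CCP3, ccp3RHS_mk_apply, TensorProduct.mk_apply, TensorProduct.map_tmul,
    LinearMap.id_coe, id_eq, ← TensorProduct.assoc_tmul,
    (TensorProduct.assoc k H H C).injective.eq_iff]
  refine ⟨fun hcc => TensorProduct.tmul_left_injective_of_ne_zero hc (hcc c).symm,
    fun hh c => by rw [hh]⟩

theorem ccpSym_mk_iff [Nontrivial C] (h : H) :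
    CCPSym k H C (TensorProduct.mk k H C h) ↔
      Coalgebra.comul h * (h ⊗ₜ[k] (1 : H)) = h ⊗ₜ h := by
  obtain ⟨c, hc⟩ := exists_ne (0 : C)
  simp only [CCPSym, ccpSymRHS_mk_apply, TensorProduct.mk_apply, TensorProduct.map_tmul,
    LinearMap.id_coe, id_eq, ← TensorProduct.assoc_tmul,
    (TensorProduct.assoc k H H C).injective.eq_iff]
  refine ⟨fun hcc => TensorProduct.tmul_left_injective_of_ne_zero hc (hcc c).symm,
    fun hh c => by rw [hh]⟩

end ConstantCoaction

noncomputable section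
variable (k : Type*) [Field k]
variable (H : Type*) [Ring H] [Algebra k H] [Coalgebra k H]
variable (C : Type*) [AddCommGroup C] [Module k C] [Coalgebra k C]

theorem rho_h_symmetricPartial_iff [Nontrivial C] (h : H) :
    (IsPartialComoduleCoalgebra k H C (TensorProduct.mk k H C h) ∧
        CCPSym k H C (TensorProduct.mk k H C h)) ↔
      (Coalgebra.counit (R := k) h = 1 ∧
        (h ⊗ₜ[k] (1 : H)) * Coalgebra.comul (R := k) h = h ⊗ₜ[k] h ∧
        Coalgebra.comul (R := k) h * (h ⊗ₜ[k] (1 : H)) = h ⊗ₜ[k] h) := by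
  rw [IsPartialComoduleCoalgebra, cc1_mk_iff, ccp3_mk_iff, ccpSym_mk_iff]
  constructor
  · rintro ⟨⟨hε, -, hl⟩, hr⟩
    exact ⟨hε, hl, hr⟩
  · rintro ⟨hε, hl, hr⟩
    have hidem : h * h = h := by
      rw [mul_self_eq_counit_smul_of_tmul_one_mul_comul hl, hε, one_smul]
    exact ⟨⟨hε, cc2_mk_of_mul_self_eq hidem, hl⟩, hr⟩

end
end

section
/- Let H be a weak Hopf algebra over a field k and let h∈H satisfy ε_H(h)=1, (h⊗1)Δ_H(h)=h⊗h, and ε_t(h)=h. Then Δ_H(h)=h⊗h. -/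
open TensorProduct

/-!
Because `h = ε_t(h)` lies in the target subalgebra, axiom (iii) together with coassociativity
gives `Δ(h) = (h ⊗ 1)Δ(1)`. Applying `id ⊗ ε` to `(h ⊗ 1)Δ(h) = h ⊗ h` shows that `h` is
idempotent, hence `Δ(h) = (h² ⊗ 1)Δ(1) = (h ⊗ 1)Δ(h) = h ⊗ h`.
-/

open TensorProduct (lid rid)

section Functionals

variable {k A B M N : Type*} [CommSemiring k] [Semiring A] [Algebra k A] [Semiring B] [Algebra k B]
  [AddCommMonoid M] [Module k M] [AddCommMonoid N] [Module k N]

lemma lid_map_mul_one_tmul (f : A →ₗ[k] k) (w : A ⊗[k] B) (b : B) :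
    lid k B (map f LinearMap.id (w * (1 ⊗ₜ b))) = lid k B (map f LinearMap.id w) * b := by
  induction w using TensorProduct.induction_on with
  | zero => simp
  | tmul u v => simp
  | add x y hx hy => simp [add_mul, hx, hy]

lemma rid_map_tmul_one_mul (f : B →ₗ[k] k) (a : A) (w : A ⊗[k] B) :
    rid k A (map LinearMap.id f ((a ⊗ₜ 1) * w)) = a * rid k A (map LinearMap.id f w) := by
  induction w using TensorProduct.induction_on with
  | zero => simp
  | tmul u v => simp
  | add x y hx hy => simp [mul_add, hx, hy]

lemma map_mul_tmul_one (f : A →ₗ[k] M) (g : B →ₗ[k] N) (a : A) (w : A ⊗[k] B) :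
    map f g (w * (a ⊗ₜ 1)) = map (f ∘ₗ LinearMap.mulRight k a) g w := by
  induction w using TensorProduct.induction_on with
  | zero => simp
  | tmul u v => simp
  | add x y hx hy => simp [add_mul, hx, hy]

lemma lid_map_assoc_tmul (f : A →ₗ[k] k) (y : A ⊗[k] M) (n : N) :
    lid k (M ⊗[k] N) (map f LinearMap.id (TensorProduct.assoc k A M N (y ⊗ₜ n)))
      = lid k M (map f LinearMap.id y) ⊗ₜ n := by
  induction y using TensorProduct.induction_on with
  | zero => simp
  | tmul u v => simp [TensorProduct.smul_tmul']
  | add x y hx hy => simp [add_tmul, hx, hy]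

lemma apply_lid_map_id (f : A →ₗ[k] k) (g : M →ₗ[k] N) (y : A ⊗[k] M) :
    g (lid k M (map f LinearMap.id y)) = lid k N (map f g y) := by
  induction y using TensorProduct.induction_on with
  | zero => simp
  | tmul u v => simp
  | add x y hx hy => simp [hx, hy]

end Functionals

section WeakBialgebra

variable {k : Type*} [Field k] {H : Type*} [Ring H] [Algebra k H] [Coalgebra k H]

lemma epsT_eq_lid_map_comul_one (x : H) :
    epsT k H x = lid k H (map (Coalgebra.counit ∘ₗ LinearMap.mulRight k x) LinearMap.id
      (Coalgebra.comul (R := k) (1 : H))) :=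
  congrArg (lid k H) (map_mul_tmul_one _ _ x _)

lemma comul_epsT (hH : IsWeakBialgebra k H) (x : H) :
    Coalgebra.comul (R := k) (epsT k H x)
      = (epsT k H x ⊗ₜ[k] (1 : H)) * Coalgebra.comul (R := k) (1 : H) := by
  set φ : H →ₗ[k] k := Coalgebra.counit ∘ₗ LinearMap.mulRight k x
  have hΔ1 : map LinearMap.id Coalgebra.comul (Coalgebra.comul (R := k) (1 : H))
      = TensorProduct.assoc k H H H (Coalgebra.comul (R := k) (1 : H) ⊗ₜ[k] (1 : H))
          * ((1 : H) ⊗ₜ[k] Coalgebra.comul (R := k) (1 : H)) := by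
    -- the last equality of axiom (iii)
    rw [hH.2.2.2.2]
    exact (Coalgebra.coassoc_apply (1 : H)).symm
  calc Coalgebra.comul (R := k) (epsT k H x)
      = lid k (H ⊗[k] H) (map φ Coalgebra.comul (Coalgebra.comul (R := k) (1 : H))) := by
        rw [epsT_eq_lid_map_comul_one, apply_lid_map_id]
    _ = lid k (H ⊗[k] H) (map φ LinearMap.id
          (map LinearMap.id Coalgebra.comul (Coalgebra.comul (R := k) (1 : H)))) := by
        rw [map_map, LinearMap.comp_id, LinearMap.id_comp]
    _ = (epsT k H x ⊗ₜ[k] (1 : H)) * Coalgebra.comul (R := k) (1 : H) := by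
        rw [hΔ1, lid_map_mul_one_tmul, lid_map_assoc_tmul, ← epsT_eq_lid_map_comul_one]

lemma mul_self_eq_of_tmul_one_mul_comul {h : H} (h1 : Coalgebra.counit (R := k) h = 1)
    (h2 : (h ⊗ₜ[k] (1 : H)) * Coalgebra.comul (R := k) h = h ⊗ₜ[k] h) : h * h = h := by
  have hcounit : rid k H (map LinearMap.id Coalgebra.counit
      (Coalgebra.comul (R := k) h)) = h := by
    rw [← LinearMap.lTensor_def, Coalgebra.lTensor_counit_comul, rid_tmul, one_smul]
  calc h * h
      = rid k H (map LinearMap.id Coalgebra.counit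
          ((h ⊗ₜ[k] (1 : H)) * Coalgebra.comul (R := k) h)) := by
        rw [rid_map_tmul_one_mul, hcounit]
    _ = h := by simp [h2, h1]

end WeakBialgebra

noncomputable section
variable (k : Type*) [Field k]
variable (H : Type*) [Ring H] [Algebra k H] [Coalgebra k H]

/-- If `h` in a weak Hopf algebra satisfies `ε(h) = 1`, `(h ⊗ 1)Δ(h) = h ⊗ h` and
`ε_t(h) = h`, then `Δ(h) = h ⊗ h`. -/
theorem comul_grouplike_of_partial_grouplike_target (S : H →ₗ[k] H)
    (hH : IsWeakHopfAlgebra k H S) (h : H)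
    (h1 : Coalgebra.counit (R := k) h = 1)
    (h2 : (h ⊗ₜ[k] (1 : H)) * Coalgebra.comul (R := k) h = h ⊗ₜ[k] h)
    (h3 : epsT k H h = h) :
    Coalgebra.comul (R := k) h = h ⊗ₜ[k] h := by
  have hcomul :
      Coalgebra.comul (R := k) h = (h ⊗ₜ[k] (1 : H)) * Coalgebra.comul (R := k) 1 := by
    simpa only [h3] using comul_epsT hH.1 h
  have hidem : h * h = h := mul_self_eq_of_tmul_one_mul_comul h1 h2
  calc Coalgebra.comul (R := k) h
      = (h ⊗ₜ[k] (1 : H)) * ((h ⊗ₜ[k] (1 : H)) * Coalgebra.comul (R := k) 1) := by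
        rw [← mul_assoc, Algebra.TensorProduct.tmul_mul_tmul, hidem, one_mul, hcomul]
    _ = (h ⊗ₜ[k] (1 : H)) * Coalgebra.comul (R := k) h := by rw [← hcomul]
    _ = h ⊗ₜ[k] h := h2

end
end

section
/- Let H be a weak Hopf algebra over a field k and let C be a left H-comodule coalgebra via ρ. Then for all c∈C and h∈H, Δ̃(P(c⊗h))=(P⊗P)(Δ̃(c⊗h)); explicitly, Δ̃(c×h)=(c₁×c₂⁽⁻¹⁾h₁)⊗(c₂⁽⁰⁾×h₂). -/
open TensorProduct

/-!
Write `P(c ⊗ h) = c⁽⁰⁾ ⊗ (c⁽⁻¹⁾ ⇀ h)` with `a ⇀ h = ε(a h₁) h₂`, and note that the `H`-legs of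
`Δ̃(c ⊗ h) = (c₁ ⊗ c₂⁽⁻¹⁾h₁) ⊗ (c₂⁽⁰⁾ ⊗ h₂)` are the Galois map `y ⊗ h ↦ y h₁ ⊗ h₂` evaluated at
`c₂⁽⁻¹⁾ ⊗ h`. Since `P ⊗ P = (P ⊗ id) ∘ (id ⊗ P)`, the identity splits in two.

First, `(id ⊗ P) ∘ Δ̃ = Δ̃`: by (CC3) this reduces to `y₁h₁ ⊗ (y₂ ⇀ h₂) = y h₁ ⊗ h₂`, which holds
because `Δ` is multiplicative and counital.

Second, `Δ̃ ∘ P = (P ⊗ id) ∘ Δ̃`: after (CC2) and (CC3) both sides take the form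
`(c₁⁽⁰⁾ ⊗ p) ⊗ (c₂⁽⁰⁾ ⊗ q)` with `p ⊗ q = F (c₁⁽⁻¹⁾ ⊗ c₂⁽⁻¹⁾)`, and the two maps `F` agree since
both send `a ⊗ b` to `ε(a b₁ h₁) b₂h₂ ⊗ h₃`.
-/

open TensorProduct LinearMap Coalgebra

namespace WeakSmash

section Hit

variable {k H : Type*} [CommSemiring k] [Semiring H] [Algebra k H]

lemma rTensor_mulLeft (a : H) (x : H ⊗[k] H) :
    rTensor H (mulLeft k a) x = (a ⊗ₜ[k] (1 : H)) * x := by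
  induction x using TensorProduct.induction_on with
  | zero => simp
  | tmul => simp [Algebra.TensorProduct.tmul_mul_tmul]
  | add _ _ h₁ h₂ => simp_all [mul_add]

variable [Coalgebra k H]

/-- The Galois map `y ⊗ h ↦ y h₁ ⊗ h₂`. -/
def galoisMap : H ⊗[k] H →ₗ[k] H ⊗[k] H :=
  rTensor H (mul' k H) ∘ₗ (TensorProduct.assoc k H H H).symm.toLinearMap ∘ₗ lTensor H comul

/-- `a ⊗ h ↦ a ⇀ h = ε(a h₁) h₂`. -/
def hit : H ⊗[k] H →ₗ[k] H :=
  (TensorProduct.lid k H).toLinearMap ∘ₗ rTensor H counit ∘ₗ galoisMap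

lemma galoisMap_tmul (y h : H) : galoisMap (y ⊗ₜ[k] h) = (y ⊗ₜ[k] (1 : H)) * comul h := by
  rw [← rTensor_mulLeft]
  simp only [galoisMap, coe_comp, LinearEquiv.coe_coe, Function.comp_apply, lTensor_tmul]
  induction (comul (R := k) h) using TensorProduct.induction_on with
  | zero => simp
  | tmul => simp
  | add _ _ h₁ h₂ => simp_all [tmul_add]

lemma hit_tmul (a h : H) :
    hit (a ⊗ₜ[k] h) = TensorProduct.lid k H (rTensor H counit ((a ⊗ₜ[k] (1 : H)) * comul h)) := by
  simp [hit, galoisMap_tmul]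

lemma comul_hit (a h : H) :
    comul (hit (a ⊗ₜ[k] h)) = rTensor H (hit ∘ₗ mk k H H a) (comul h) := by
  have comul_counit_mul : ∀ z : H ⊗[k] H,
      comul (TensorProduct.lid k H (rTensor H counit ((a ⊗ₜ[k] (1 : H)) * z))) =
        TensorProduct.lid k (H ⊗[k] H) (rTensor _ (counit ∘ₗ mulLeft k a) (lTensor H comul z)) := by
    intro z
    induction z using TensorProduct.induction_on with
    | zero => simp
    | tmul => simp [Algebra.TensorProduct.tmul_mul_tmul]
    | add _ _ h₁ h₂ => simp_all [mul_add]
  have hit_mk : hit ∘ₗ mk k H H a = ((TensorProduct.lid k H).toLinearMap ∘ₗ rTensor H counit ∘ₗ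
      mulLeft k (a ⊗ₜ[k] (1 : H))) ∘ₗ comul := by
    ext h; simp [hit_tmul]
  rw [hit_tmul, comul_counit_mul, ← coassoc_apply, hit_mk, rTensor_comp_apply (M := H) (f := comul)]
  induction rTensor H (comul (R := k) (A := H)) (comul h) using TensorProduct.induction_on with
  | zero => simp
  | add _ _ h₁ h₂ => simp_all
  | tmul p r =>
    induction p using TensorProduct.induction_on with
    | zero => simp
    | add _ _ h₁ h₂ => simp_all [add_tmul]
    | tmul => simp [smul_tmul']

lemma rTensor_comul_tmul_one_mul (hΔ : ∀ a b : H, comul (R := k) (a * b) = comul a * comul b)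
    (y : H) (z : H ⊗[k] H) :
    rTensor H comul ((y ⊗ₜ[k] (1 : H)) * z) = (comul y ⊗ₜ[k] (1 : H)) * rTensor H comul z := by
  induction z using TensorProduct.induction_on with
  | zero => simp
  | tmul => simp [Algebra.TensorProduct.tmul_mul_tmul, hΔ]
  | add _ _ h₁ h₂ => simp_all [mul_add]

/-- `y₁h₁ ⊗ (y₂ ⇀ h₂) = y h₁ ⊗ h₂`. -/
lemma lTensor_hit_galoisMap_comul (hΔ : ∀ a b : H, comul (R := k) (a * b) = comul a * comul b)
    (h : H) :
    lTensor H (hit ∘ₗ (TensorProduct.comm k H H).toLinearMap) ∘ₗ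
        (TensorProduct.assoc k H H H).toLinearMap ∘ₗ rTensor H (galoisMap ∘ₗ (mk k H H).flip h) ∘ₗ
        comul = galoisMap ∘ₗ (mk k H H).flip h := by
  ext y
  have expand : ∀ z : H ⊗[k] H,
      lTensor H (hit ∘ₗ (TensorProduct.comm k H H).toLinearMap)
          (TensorProduct.assoc k H H H (rTensor H (galoisMap ∘ₗ (mk k H H).flip h) z)) =
        rTensor H (TensorProduct.rid k H ∘ₗ lTensor H counit)
          ((z ⊗ₜ[k] (1 : H)) * (TensorProduct.assoc k H H H).symm (lTensor H comul (comul h))) := by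
    intro z
    induction z using TensorProduct.induction_on with
    | zero => simp
    | add _ _ h₁ h₂ => simp_all [add_tmul, add_mul]
    | tmul y₁ y₂ =>
      simp only [coe_comp, Function.comp_apply, rTensor_tmul, flip_apply, mk_apply, galoisMap_tmul]
      induction comul (R := k) h using TensorProduct.induction_on with
      | zero => simp
      | add _ _ h₁ h₂ => simp_all [mul_add, add_tmul]
      | tmul h₁ h₂ =>
        simp only [Algebra.TensorProduct.tmul_mul_tmul, one_mul, assoc_tmul, lTensor_tmul,
          coe_comp, Function.comp_apply, LinearEquiv.coe_coe, comm_tmul, hit_tmul]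
        induction comul (R := k) h₂ using TensorProduct.induction_on with
        | zero => simp
        | add _ _ h₁ h₂ => simp_all [mul_add, tmul_add]
        | tmul => simp [Algebra.TensorProduct.tmul_mul_tmul, smul_tmul]
  simp only [coe_comp, LinearEquiv.coe_coe, Function.comp_apply]
  rw [expand, coassoc_symm_apply, ← rTensor_comul_tmul_one_mul hΔ]
  simp only [flip_apply, mk_apply, galoisMap_tmul]
  induction (y ⊗ₜ[k] (1 : H)) * comul (R := k) h using TensorProduct.induction_on with
  | zero => simp
  | add _ _ h₁ h₂ => simp_all
  | tmul => simp

/-- `b₂ (a b₁ ⇀ h)₁ ⊗ (a b₁ ⇀ h)₂ = (a ⇀ b h₁) ⊗ h₂`. -/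
lemma galoisMap_hit_galoisMap (hΔ : ∀ a b : H, comul (R := k) (a * b) = comul a * comul b)
    (h : H) :
    galoisMap ∘ₗ lTensor H (hit ∘ₗ (mk k H H).flip h) ∘ₗ (TensorProduct.comm k H H).toLinearMap ∘ₗ
        galoisMap =
      rTensor H hit ∘ₗ (TensorProduct.assoc k H H H).symm.toLinearMap ∘ₗ
        lTensor H (galoisMap ∘ₗ (mk k H H).flip h) := by
  ext a b
  have expand : ∀ z : H ⊗[k] H,
      galoisMap (lTensor H (hit ∘ₗ (mk k H H).flip h)
          (TensorProduct.comm k H H ((a ⊗ₜ[k] 1) * z))) =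
        rTensor H ((TensorProduct.lid k H).toLinearMap ∘ₗ rTensor H counit)
          ((((a ⊗ₜ[k] (1 : H)) * z) ⊗ₜ[k] (1 : H)) * rTensor H comul (comul h)) := by
    intro z
    induction z using TensorProduct.induction_on with
    | zero => simp
    | add _ _ h₁ h₂ => simp_all [mul_add, add_tmul, add_mul]
    | tmul x y =>
      simp only [Algebra.TensorProduct.tmul_mul_tmul, comm_tmul, lTensor_tmul, coe_comp,
        Function.comp_apply, flip_apply, mk_apply, galoisMap_tmul, comul_hit]
      induction comul (R := k) h using TensorProduct.induction_on with
      | zero => simp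
      | add _ _ h₁ h₂ => simp_all [mul_add]
      | tmul h₁ h₂ =>
        simp only [rTensor_tmul, coe_comp, Function.comp_apply, mk_apply, hit_tmul,
          Algebra.TensorProduct.tmul_mul_tmul, one_mul]
        induction comul (R := k) h₁ using TensorProduct.induction_on with
        | zero => simp
        | add _ _ h₁ h₂ => simp_all [mul_add, add_tmul]
        | tmul => simp [Algebra.TensorProduct.tmul_mul_tmul]
  simp only [AlgebraTensorModule.curry_apply, curry_apply, coe_restrictScalars, coe_comp,
    LinearEquiv.coe_coe, Function.comp_apply, lTensor_tmul, flip_apply, mk_apply]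
  rw [galoisMap_tmul, expand, galoisMap_tmul, ← mul_one (1 : H),
    ← Algebra.TensorProduct.tmul_mul_tmul, mul_assoc, ← rTensor_comul_tmul_one_mul hΔ, mul_one]
  induction (b ⊗ₜ[k] (1 : H)) * comul (R := k) h using TensorProduct.induction_on with
  | zero => simp
  | add _ _ h₁ h₂ => simp_all [mul_add, tmul_add]
  | tmul => simp [Algebra.TensorProduct.tmul_mul_tmul, hit_tmul]

end Hit

section Spread

variable {k H C M N : Type*} [CommSemiring k] [AddCommMonoid H] [Module k H]
  [AddCommMonoid C] [Module k C] [AddCommMonoid M] [Module k M] [AddCommMonoid N] [Module k N]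

def spread : C ⊗[k] ((H ⊗[k] H) ⊗[k] C) →ₗ[k] (C ⊗[k] H) ⊗[k] (C ⊗[k] H) :=
  (tensorTensorTensorComm k C C H H).toLinearMap ∘ₗ
    (TensorProduct.assoc k C C (H ⊗[k] H)).symm.toLinearMap ∘ₗ
    lTensor C (TensorProduct.comm k (H ⊗[k] H) C).toLinearMap

@[simp] lemma spread_tmul (u v : C) (p q : H) :
    spread (u ⊗ₜ[k] ((p ⊗ₜ[k] q) ⊗ₜ[k] v)) = (u ⊗ₜ[k] p) ⊗ₜ[k] (v ⊗ₜ[k] q) := by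
  simp [spread]

def gather : (H ⊗[k] C) ⊗[k] (M ⊗[k] C) →ₗ[k] C ⊗[k] ((H ⊗[k] M) ⊗[k] C) :=
  lTensor C (TensorProduct.assoc k H M C).symm.toLinearMap ∘ₗ
    (TensorProduct.leftComm k H C (M ⊗[k] C)).toLinearMap ∘ₗ
    (TensorProduct.assoc k H C (M ⊗[k] C)).toLinearMap

@[simp] lemma gather_tmul (a : H) (u : C) (z : M ⊗[k] C) :
    gather ((a ⊗ₜ[k] u) ⊗ₜ[k] z) = u ⊗ₜ[k] (TensorProduct.assoc k H M C).symm (a ⊗ₜ[k] z) := by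
  simp [gather]

lemma gather_lTensor_rTensor (f : M →ₗ[k] N) (x : (H ⊗[k] C) ⊗[k] (M ⊗[k] C)) :
    gather (lTensor (H ⊗[k] C) (rTensor C f) x) = lTensor C (rTensor C (lTensor H f)) (gather x) := by
  induction x using TensorProduct.induction_on with
  | zero => simp
  | add _ _ h₁ h₂ => simp_all
  | tmul x z =>
    induction x using TensorProduct.induction_on with
    | zero => simp
    | add _ _ h₁ h₂ => simp_all [add_tmul]
    | tmul a u =>
      induction z using TensorProduct.induction_on with
      | zero => simp
      | add _ _ h₁ h₂ => simp_all [tmul_add]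
      | tmul => simp

end Spread

section Smash

variable {k H C : Type*} [Field k] [Ring H] [Algebra k H] [Coalgebra k H]
  [AddCommGroup C] [Module k C] (ρ : C →ₗ[k] H ⊗[k] C)

lemma smashP_tmul (c : C) (h : H) :
    smashP k H C ρ (c ⊗ₜ h) =
      TensorProduct.comm k H C (rTensor C (hit ∘ₗ (mk k H H).flip h) (ρ c)) := by
  simp only [smashP, coe_comp, LinearEquiv.coe_coe, Function.comp_apply, map_tmul]
  induction ρ c using TensorProduct.induction_on with
  | zero => simp
  | add _ _ h₁ h₂ => simp_all [add_tmul]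
  | tmul a d =>
    simp only [hit_tmul, rTensor_tmul, coe_comp, Function.comp_apply, flip_apply, mk_apply,
      comm_tmul]
    induction comul (R := k) h using TensorProduct.induction_on with
    | zero => simp
    | add _ _ h₁ h₂ => simp_all [tmul_add, mul_add]
    | tmul g g' => simp [smul_tmul', Algebra.TensorProduct.tmul_mul_tmul]

lemma lTensor_smashP_spread (x : C ⊗[k] ((H ⊗[k] H) ⊗[k] C)) :
    lTensor (C ⊗[k] H) (smashP k H C ρ) (spread x) =
      spread (lTensor C (rTensor C (lTensor H (hit ∘ₗ (TensorProduct.comm k H H).toLinearMap) ∘ₗ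
        (TensorProduct.assoc k H H H).toLinearMap) ∘ₗ
        (TensorProduct.assoc k (H ⊗[k] H) H C).symm.toLinearMap ∘ₗ lTensor (H ⊗[k] H) ρ) x) := by
  induction x using TensorProduct.induction_on with
  | zero => simp
  | add _ _ h₁ h₂ => simp_all
  | tmul u z =>
    induction z using TensorProduct.induction_on with
    | zero => simp
    | add _ _ h₁ h₂ => simp_all [tmul_add]
    | tmul m v =>
      induction m using TensorProduct.induction_on with
      | zero => simp
      | add _ _ h₁ h₂ => simp_all [tmul_add, add_tmul]
      | tmul p q =>
        simp only [spread_tmul, lTensor_tmul, smashP_tmul, coe_comp, Function.comp_apply]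
        induction ρ v using TensorProduct.induction_on with
        | zero => simp
        | add _ _ h₁ h₂ => simp_all [tmul_add]
        | tmul => simp

lemma rTensor_smashP_spread (x : C ⊗[k] ((H ⊗[k] H) ⊗[k] C)) :
    rTensor (C ⊗[k] H) (smashP k H C ρ) (spread x) =
      spread (lTensor C (rTensor C (rTensor H hit ∘ₗ
        (TensorProduct.assoc k H H H).symm.toLinearMap)) (gather (rTensor _ ρ x))) := by
  induction x using TensorProduct.induction_on with
  | zero => simp
  | add _ _ h₁ h₂ => simp_all
  | tmul u z =>
    induction z using TensorProduct.induction_on with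
    | zero => simp
    | add _ _ h₁ h₂ => simp_all [tmul_add]
    | tmul m v =>
      induction m using TensorProduct.induction_on with
      | zero => simp
      | add _ _ h₁ h₂ => simp_all [tmul_add, add_tmul]
      | tmul p q =>
        simp only [spread_tmul, rTensor_tmul, smashP_tmul]
        induction ρ u using TensorProduct.induction_on with
        | zero => simp
        | add _ _ h₁ h₂ => simp_all [add_tmul]
        | tmul => simp

lemma assoc_symm_lTensor_rTensor_coaction {M : Type*} [AddCommMonoid M] [Module k M]
    (hρ : CC3 k H C ρ) (f : H →ₗ[k] M) (c : C) :
    (TensorProduct.assoc k M H C).symm (lTensor M ρ (rTensor C f (ρ c))) =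
      rTensor C (rTensor H f ∘ₗ comul) (ρ c) := by
  have hρc : (TensorProduct.assoc k H H C).symm (lTensor H ρ (ρ c)) = rTensor C comul (ρ c) := by
    rw [LinearEquiv.symm_apply_eq]; exact hρ c
  rw [rTensor_comp_apply, ← hρc]
  induction ρ c using TensorProduct.induction_on with
  | zero => simp
  | add _ _ h₁ h₂ => simp_all
  | tmul a v =>
    simp only [rTensor_tmul, lTensor_tmul]
    induction ρ v using TensorProduct.induction_on with
    | zero => simp
    | add _ _ h₁ h₂ => simp_all [tmul_add]
    | tmul => simp

lemma gather_mixHC (hρ : CC3 k H C ρ) (w : C ⊗[k] C) :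
    gather ((TensorProduct.assoc k H C (H ⊗[k] C)).symm
        (lTensor H (lTensor C ρ) (mixHC k H C (map ρ ρ w)))) =
      lTensor C (rTensor C galoisMap) (gather (map ρ ρ w)) := by
  induction w using TensorProduct.induction_on with
  | zero => simp
  | add _ _ h₁ h₂ => simp_all
  | tmul w₁ w₂ =>
    simp only [map_tmul]
    induction ρ w₁ using TensorProduct.induction_on with
    | zero => simp
    | add _ _ h₁ h₂ => simp_all [add_tmul]
    | tmul a u =>
      have hmix : gather ((TensorProduct.assoc k H C (H ⊗[k] C)).symm
          (lTensor H (lTensor C ρ) (mixHC k H C ((a ⊗ₜ[k] u) ⊗ₜ[k] ρ w₂)))) =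
          u ⊗ₜ (TensorProduct.assoc k H H C).symm
            (lTensor H ρ (rTensor C (mulLeft k a) (ρ w₂))) := by
        induction ρ w₂ using TensorProduct.induction_on with
        | zero => simp
        | add _ _ h₁ h₂ => simp_all [tmul_add]
        | tmul => simp [mixHC]
      rw [hmix, assoc_symm_lTensor_rTensor_coaction ρ hρ, gather_tmul, lTensor_tmul]
      induction ρ w₂ using TensorProduct.induction_on with
      | zero => simp
      | add _ _ h₁ h₂ => simp_all [tmul_add]
      | tmul => simp [galoisMap_tmul, rTensor_mulLeft]

variable [Coalgebra k C]

lemma smashComul_tmul (c : C) (h : H) :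
    smashComul k H C ρ (c ⊗ₜ h) =
      spread (lTensor C (rTensor C (galoisMap ∘ₗ (mk k H H).flip h) ∘ₗ ρ) (comul c)) := by
  simp only [smashComul, coe_comp, LinearEquiv.coe_coe, Function.comp_apply, map_tmul]
  induction comul (R := k) c using TensorProduct.induction_on with
  | zero => simp
  | add _ _ h₁ h₂ => simp_all [add_tmul]
  | tmul u w =>
    simp only [map_tmul, id_coe, id_eq, lTensor_tmul, coe_comp, Function.comp_apply]
    induction ρ w using TensorProduct.induction_on with
    | zero => simp
    | add _ _ h₁ h₂ => simp_all [tmul_add, add_tmul]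
    | tmul y v =>
      simp only [rTensor_tmul, coe_comp, Function.comp_apply, flip_apply, mk_apply,
        galoisMap_tmul]
      induction comul (R := k) h using TensorProduct.induction_on with
      | zero => simp
      | add _ _ h₁ h₂ => simp_all [tmul_add, add_tmul, mul_add]
      | tmul g g' => simp [Algebra.TensorProduct.tmul_mul_tmul]

lemma smashComul_comm_rTensor_hit (h : H) (x : H ⊗[k] C) :
    smashComul k H C ρ (TensorProduct.comm k H C (rTensor C (hit ∘ₗ (mk k H H).flip h) x)) =
      spread (lTensor C (rTensor C (galoisMap ∘ₗ lTensor H (hit ∘ₗ (mk k H H).flip h) ∘ₗ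
        (TensorProduct.comm k H H).toLinearMap))
        (gather ((TensorProduct.assoc k H C (H ⊗[k] C)).symm
          (lTensor H (lTensor C ρ ∘ₗ comul) x)))) := by
  induction x using TensorProduct.induction_on with
  | zero => simp
  | add _ _ h₁ h₂ => simp_all
  | tmul a d =>
    simp only [rTensor_tmul, comm_tmul, smashComul_tmul, lTensor_tmul, coe_comp,
      Function.comp_apply]
    induction comul (R := k) d using TensorProduct.induction_on with
    | zero => simp
    | add _ _ h₁ h₂ => simp_all [tmul_add]
    | tmul u w =>
      simp only [lTensor_tmul, coe_comp, Function.comp_apply, assoc_symm_tmul, gather_tmul]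
      induction ρ w using TensorProduct.induction_on with
      | zero => simp
      | add _ _ h₁ h₂ => simp_all [tmul_add]
      | tmul => simp

/-- `c ↦ (c₁⁽⁰⁾ ⊗ p) ⊗ (c₂⁽⁰⁾ ⊗ q)` where `p ⊗ q = F (c₁⁽⁻¹⁾ ⊗ c₂⁽⁻¹⁾)`. -/
def coactSpread (F : H ⊗[k] H →ₗ[k] H ⊗[k] H) : C →ₗ[k] (C ⊗[k] H) ⊗[k] (C ⊗[k] H) :=
  spread ∘ₗ lTensor C (rTensor C F) ∘ₗ gather ∘ₗ map ρ ρ ∘ₗ comul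

lemma lTensor_smashP_smashComul_tmul
    (hΔ : ∀ a b : H, comul (R := k) (a * b) = comul a * comul b) (hρ : CC3 k H C ρ)
    (c : C) (h : H) :
    lTensor (C ⊗[k] H) (smashP k H C ρ) (smashComul k H C ρ (c ⊗ₜ h)) =
      smashComul k H C ρ (c ⊗ₜ h) := by
  rw [smashComul_tmul, lTensor_smashP_spread, ← lTensor_comp_apply]
  congr 3
  ext c'
  simp only [coe_comp, LinearEquiv.coe_coe, Function.comp_apply]
  rw [assoc_symm_lTensor_rTensor_coaction ρ hρ, ← rTensor_comp_apply, comp_assoc,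
    lTensor_hit_galoisMap_comul hΔ]

lemma smashComul_smashP_tmul (hρ₂ : CC2 k H C ρ) (hρ₃ : CC3 k H C ρ) (c : C) (h : H) :
    smashComul k H C ρ (smashP k H C ρ (c ⊗ₜ h)) =
      coactSpread ρ (galoisMap ∘ₗ lTensor H (hit ∘ₗ (mk k H H).flip h) ∘ₗ
        (TensorProduct.comm k H H).toLinearMap ∘ₗ galoisMap) c := by
  rw [smashP_tmul, smashComul_comm_rTensor_hit, lTensor_comp_apply,
    show lTensor H (comul (R := k) (A := C)) (ρ c) = _ from hρ₂ c, gather_mixHC ρ hρ₃,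
    ← lTensor_comp_apply, ← rTensor_comp]
  rfl

lemma rTensor_smashP_smashComul_tmul (c : C) (h : H) :
    rTensor (C ⊗[k] H) (smashP k H C ρ) (smashComul k H C ρ (c ⊗ₜ h)) =
      coactSpread ρ (rTensor H hit ∘ₗ (TensorProduct.assoc k H H H).symm.toLinearMap ∘ₗ
        lTensor H (galoisMap ∘ₗ (mk k H H).flip h)) c := by
  have coaction_both : rTensor _ ρ
      (lTensor C (rTensor C (galoisMap ∘ₗ (mk k H H).flip h) ∘ₗ ρ) (comul c)) =
      lTensor (H ⊗[k] C) (rTensor C (galoisMap ∘ₗ (mk k H H).flip h)) (map ρ ρ (comul c)) := by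
    rw [← comp_apply (rTensor _ ρ), rTensor_comp_lTensor, ← comp_apply (lTensor _ _),
      lTensor_comp_map]
  rw [smashComul_tmul, rTensor_smashP_spread, coaction_both, gather_lTensor_rTensor,
    ← lTensor_comp_apply, ← rTensor_comp]
  rfl

end Smash

end WeakSmash

noncomputable section
variable (k : Type*) [Field k]
variable (H : Type*) [Ring H] [Algebra k H] [Coalgebra k H]
variable (C : Type*) [AddCommGroup C] [Module k C] [Coalgebra k C]

/-- `Δ̃(P(c ⊗ h)) = (P ⊗ P)(Δ̃(c ⊗ h))`, i.e. `Δ̃(c × h) = (c₁ × c₂⁽⁻¹⁾h₁) ⊗ (c₂⁽⁰⁾ × h₂)`. -/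
theorem smashComul_smashP (S : H →ₗ[k] H) (hH : IsWeakHopfAlgebra k H S)
    (ρ : C →ₗ[k] H ⊗[k] C) (hρ : IsComoduleCoalgebra k H C ρ) :
    ∀ (c : C) (h : H),
      smashComul k H C ρ (smashP k H C ρ (c ⊗ₜ[k] h))
        = TensorProduct.map (smashP k H C ρ) (smashP k H C ρ)
            (smashComul k H C ρ (c ⊗ₜ[k] h)) := by
  intro c h
  obtain ⟨-, hρ₂, hρ₃, -⟩ := hρ
  rw [WeakSmash.smashComul_smashP_tmul ρ hρ₂ hρ₃, WeakSmash.galoisMap_hit_galoisMap hH.1.1,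
    ← WeakSmash.rTensor_smashP_smashComul_tmul, ← rTensor_comp_lTensor, comp_apply,
    WeakSmash.lTensor_smashP_smashComul_tmul ρ hH.1.1 hρ₃]

end
end

section
/- Let H be a weak Hopf algebra over a field k and let C be a left H-comodule coalgebra via ρ. Then for all c∈C and h∈H, (ε̂⊗id)(Δ̃(c×h)) = c×h = (id⊗ε̂)(Δ̃(c×h)); i.e. ε̂ is a counit for the coproduct Δ̃ on the weak smash coproduct C×H. -/
open TensorProduct

/-! Write `x ⇀ h := ε(x h₁) h₂` (`counitHit`), so that `P(c ⊗ h) = c⁽⁰⁾ ⊗ (c⁽⁻¹⁾ ⇀ h)`, and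
`r(c) := c⁽⁻¹⁾ ε_C(c⁽⁰⁾)` (`coactionCounit`), so that `ε̂(c ⊗ h) = ε(r(c) h)`.

Applying `ε_C` to the middle leg of (CC2) shows `(ε̂ ⊗ id) Δ̃ = P`; since `Δ` is multiplicative,
`x₂ ⇀ (x₁ ⇀ h) = x ⇀ h`, so (CC3) makes `P` idempotent, which gives the left identity.

By (CC3) and multiplicativity, `(id ⊗ ε̂) Δ̃ (c ⊗ h) = c₁ ⊗ r(c₂) h`. On `P(c ⊗ h)` this becomes,
after (CC2) and (CC3), `c₁⁽⁰⁾ ⊗ r(c₂)₂ ((c₁⁽⁻¹⁾ r(c₂)₁) ⇀ h) = c₁⁽⁰⁾ ⊗ (c₁⁽⁻¹⁾ ⇀ r(c₂) h)`. By (CC4)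
`r(c₂)` lies in the image of `ε_t`, and the axiom `(Δ1 ⊗ 1)(1 ⊗ Δ1) = (Δ ⊗ id)Δ1` gives
`Δ(ε_t(b) h) = (ε_t(b) ⊗ 1) Δh`; hence `x ⇀ r(c₂) h = x r(c₂) ⇀ h`. Finally `ε_C` on the last leg
of (CC2) recombines `c₁⁽⁻¹⁾ r(c₂) ⊗ c₁⁽⁰⁾` into `ρ(c)`. -/

namespace WeakSmashCoproduct

open Coalgebra

section CounitHit

/-- `counitHit x h = ε(x h₁) h₂`. -/
def counitHit (R H : Type*) [CommSemiring R] [Semiring H] [Algebra R H] [Coalgebra R H] :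
    H →ₗ[R] H →ₗ[R] H :=
  ((LinearMap.rTensorHom H ∘ₗ (LinearMap.mul R H).compr₂ counit).compl₂ comul).compr₂
    (TensorProduct.lid R H).toLinearMap

variable {R H : Type*} [CommSemiring R] [Semiring H] [Algebra R H] [Coalgebra R H]

lemma counitHit_apply (x h : H) :
    counitHit R H x h
      = TensorProduct.lid R H ((counit ∘ₗ LinearMap.mulLeft R x).rTensor H (comul (R := R) h)) :=
  rfl

/-- `x₂ ⇀ (x₁ ⇀ h) = x ⇀ h`. -/
lemma lift_counitHit_comul (hmul : ∀ a b : H, comul (R := R) (a * b) = comul a * comul b)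
    (x h : H) :
    TensorProduct.lift ((counitHit R H).flip ∘ₗ (counitHit R H).flip h) (comul (R := R) x)
      = counitHit R H x h := by
  -- with `ε₂ = ε ⊗ ε`, both sides are `ε₂(Δx · (h₁ ⊗ h₂)) h₃`, as `ε(x a) = ε₂(Δx Δa)`
  set ε₂ : H ⊗[R] H →ₗ[R] R :=
    counit ∘ₗ (TensorProduct.lid R H).toLinearMap ∘ₗ (counit : H →ₗ[R] R).rTensor H
  have hε₂ : ∀ a : H, ε₂ (comul a) = counit (R := R) a := fun a => by
    simp [ε₂, rTensor_counit_comul]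
  have hexpand : ∀ u : H ⊗[R] H,
      TensorProduct.lift ((counitHit R H).flip ∘ₗ (counitHit R H).flip h) u
        = TensorProduct.lid R H ((ε₂ ∘ₗ LinearMap.mul R (H ⊗[R] H) u).rTensor H
            ((TensorProduct.assoc R H H H).symm ((comul (R := R)).lTensor H (comul h)))) := by
    intro u
    induction u using TensorProduct.induction_on with
    | zero => simp
    | add u u' hu hu' => simp [hu, hu', LinearMap.comp_add, LinearMap.rTensor_add]
    | tmul a b =>
      simp only [TensorProduct.lift.tmul, LinearMap.comp_apply, LinearMap.flip_apply,
        counitHit_apply]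
      generalize comul (R := R) h = v
      induction v using TensorProduct.induction_on with
      | zero => simp
      | add v v' hv hv' => simp_all
      | tmul p s =>
        simp only [LinearMap.rTensor_tmul, LinearMap.coe_comp, Function.comp_apply,
          LinearMap.mulLeft_apply, lid_tmul, map_smul, LinearMap.lTensor_tmul]
        generalize comul (R := R) s = w
        induction w using TensorProduct.induction_on with
        | zero => simp
        | add w w' hw hw' => simp_all [tmul_add, smul_add]
        | tmul q t => simp [ε₂, Algebra.TensorProduct.tmul_mul_tmul, smul_smul]
  have hcounit : ε₂ ∘ₗ LinearMap.mul R (H ⊗[R] H) (comul x) ∘ₗ comul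
      = counit ∘ₗ LinearMap.mulLeft R x := by
    ext a
    simp [← hmul, hε₂]
  rw [hexpand, counitHit_apply, ← hcounit, coassoc_symm_apply]
  simp only [LinearMap.rTensor_comp_apply]

/-- `z₂ ((x z₁) ⇀ h) = x ⇀ z h`. -/
lemma lift_mul_counitHit_comul (hmul : ∀ a b : H, comul (R := R) (a * b) = comul a * comul b)
    (x z h : H) :
    TensorProduct.lift
        ((LinearMap.mul R H).flip ∘ₗ (counitHit R H).flip h ∘ₗ LinearMap.mulLeft R x)
        (comul (R := R) z)
      = counitHit R H x (z * h) := by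
  have hexpand : ∀ u : H ⊗[R] H,
      TensorProduct.lift ((LinearMap.mul R H).flip ∘ₗ (counitHit R H).flip h ∘ₗ
          LinearMap.mulLeft R x) u
        = TensorProduct.lid R H ((counit ∘ₗ LinearMap.mulLeft R x).rTensor H
            (u * comul (R := R) h)) := by
    intro u
    induction u using TensorProduct.induction_on with
    | zero => simp
    | add u u' hu hu' => simp [hu, hu', add_mul]
    | tmul a b =>
      simp only [TensorProduct.lift.tmul, LinearMap.comp_apply, LinearMap.flip_apply,
        counitHit_apply]
      generalize comul (R := R) h = v
      induction v using TensorProduct.induction_on with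
      | zero => simp
      | add v v' hv hv' => simp_all [mul_add]
      | tmul p s => simp [Algebra.TensorProduct.tmul_mul_tmul]
  rw [hexpand, counitHit_apply, hmul]

lemma counitHit_mul_of_comul_mul {z h : H}
    (hz : comul (R := R) (z * h) = (z ⊗ₜ 1) * comul (R := R) h) (x : H) :
    counitHit R H x (z * h) = counitHit R H (x * z) h := by
  rw [counitHit_apply, counitHit_apply, hz]
  generalize comul (R := R) h = v
  induction v using TensorProduct.induction_on with
  | zero => simp
  | add v v' hv hv' => simp_all [mul_add]
  | tmul p s => simp [Algebra.TensorProduct.tmul_mul_tmul]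

end CounitHit

section WeakBialgebra

variable {k H : Type*} [Field k] [Ring H] [Algebra k H] [Coalgebra k H]

lemma epsT_apply (b : H) :
    epsT k H b = TensorProduct.lid k H
      ((counit : H →ₗ[k] k).rTensor H (comul (R := k) 1 * (b ⊗ₜ 1))) :=
  rfl

lemma comul_epsT (hH : IsWeakBialgebra k H) (b : H) :
    comul (R := k) (epsT k H b) = (epsT k H b ⊗ₜ 1) * comul (R := k) 1 := by
  -- `Θ(a ⊗ u) = ε(a b) u` maps both sides of the axiom `(Δ1 ⊗ 1)(1 ⊗ Δ1) = (Δ ⊗ id)Δ1`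
  set Θ : H ⊗[k] (H ⊗[k] H) →ₗ[k] H ⊗[k] H :=
    (TensorProduct.lid k (H ⊗[k] H)).toLinearMap ∘ₗ (counit ∘ₗ LinearMap.mulRight k b).rTensor _
  have hΘ : ∀ v w : H ⊗[k] H,
      Θ (TensorProduct.assoc k H H H (v ⊗ₜ 1) * (1 ⊗ₜ w))
        = (TensorProduct.lid k H ((counit : H →ₗ[k] k).rTensor H (v * (b ⊗ₜ 1))) ⊗ₜ 1) * w := by
    intro v w
    induction v using TensorProduct.induction_on with
    | zero => simp
    | add v v' hv hv' => simp_all [add_tmul, add_mul]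
    | tmul p q =>
      induction w using TensorProduct.induction_on with
      | zero => simp
      | add w w' hw hw' => simp_all [tmul_add, mul_add]
      | tmul r s => simp [Θ, Algebra.TensorProduct.tmul_mul_tmul, smul_tmul']
  have hcoassoc : Θ (TensorProduct.assoc k H H H
      (TensorProduct.map comul LinearMap.id (comul (R := k) (1 : H))))
        = comul (R := k) (epsT k H b) := by
    rw [epsT_apply, ← LinearMap.rTensor_def, coassoc_apply]
    generalize comul (R := k) (1 : H) = v
    induction v using TensorProduct.induction_on with
    | zero => simp
    | add v v' hv hv' => simp_all [add_mul]
    | tmul p q => simp [Θ, Algebra.TensorProduct.tmul_mul_tmul]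
  rw [← hcoassoc, ← hH.2.2.2.2, hΘ, epsT_apply]

lemma comul_epsT_mul (hH : IsWeakBialgebra k H) (b h : H) :
    comul (R := k) (epsT k H b * h) = (epsT k H b ⊗ₜ 1) * comul (R := k) h := by
  rw [hH.1, comul_epsT hH, mul_assoc, ← hH.1, one_mul]

end WeakBialgebra

section CoactionCounit

variable {R M C : Type*} [CommSemiring R] [AddCommMonoid M] [Module R M]
  [AddCommMonoid C] [Module R C] [Coalgebra R C]

def coactionCounit (ρ : C →ₗ[R] M ⊗[R] C) : C →ₗ[R] M :=
  (TensorProduct.rid R M).toLinearMap ∘ₗ (counit : C →ₗ[R] R).lTensor M ∘ₗ ρ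

lemma coactionCounit_apply (ρ : C →ₗ[R] M ⊗[R] C) (c : C) :
    coactionCounit ρ c = TensorProduct.rid R M ((counit : C →ₗ[R] R).lTensor M (ρ c)) :=
  rfl

end CoactionCounit

section SmashP

variable {k H C : Type*} [Field k] [Ring H] [Algebra k H] [Coalgebra k H]
  [AddCommGroup C] [Module k C] {ρ : C →ₗ[k] H ⊗[k] C}

lemma smashP_tmul (c : C) (h : H) :
    smashP k H C ρ (c ⊗ₜ h)
      = TensorProduct.comm k H C (((counitHit k H).flip h).rTensor C (ρ c)) := by
  simp only [smashP, LinearMap.comp_apply, TensorProduct.map_tmul]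
  generalize ρ c = y
  induction y using TensorProduct.induction_on with
  | zero => simp
  | add y y' hy hy' => simp_all [add_tmul]
  | tmul x d =>
    simp only [LinearMap.rTensor_tmul, LinearMap.flip_apply, counitHit_apply]
    generalize comul (R := k) h = v
    induction v using TensorProduct.induction_on with
    | zero => simp
    | add v v' hv hv' => simp_all [tmul_add]
    | tmul a b => simp [tmul_smul]

lemma isIdempotentElem_smashP (hmul : ∀ a b : H, comul (R := k) (a * b) = comul a * comul b)
    (hρ : CC3 k H C ρ) : IsIdempotentElem (smashP k H C ρ) := by
  refine TensorProduct.ext' fun c h => ?_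
  have hexpand : ∀ y : H ⊗[k] C,
      smashP k H C ρ (TensorProduct.comm k H C (((counitHit k H).flip h).rTensor C y))
        = TensorProduct.comm k H C
            ((TensorProduct.lift ((counitHit k H).flip ∘ₗ (counitHit k H).flip h)).rTensor C
              ((TensorProduct.assoc k H H C).symm (ρ.lTensor H y))) := by
    intro y
    induction y using TensorProduct.induction_on with
    | zero => simp
    | add y y' hy hy' => simp_all
    | tmul x d =>
      simp only [LinearMap.rTensor_tmul, LinearMap.lTensor_tmul, TensorProduct.comm_tmul,
        smashP_tmul]
      generalize ρ d = y
      induction y using TensorProduct.induction_on with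
      | zero => simp
      | add y y' hy hy' => simp_all [tmul_add]
      | tmul x' d' => simp
  have hcomul : TensorProduct.lift ((counitHit k H).flip ∘ₗ (counitHit k H).flip h) ∘ₗ comul
      = (counitHit k H).flip h :=
    LinearMap.ext fun x => lift_counitHit_comul hmul x h
  have hcoassoc : ρ.lTensor H (ρ c)
      = TensorProduct.assoc k H H C ((comul (R := k)).rTensor C (ρ c)) := hρ c
  rw [Module.End.mul_apply, smashP_tmul, hexpand, hcoassoc, LinearEquiv.symm_apply_apply,
    ← LinearMap.rTensor_comp_apply, hcomul]

end SmashP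

section Comodule

variable {k H C : Type*} [Field k] [Ring H] [Algebra k H]
  [AddCommGroup C] [Module k C] [Coalgebra k C] {ρ : C →ₗ[k] H ⊗[k] C}

/-- `r(c₁) c₂⁽⁻¹⁾ ⊗ c₂⁽⁰⁾ = ρ(c)`. -/
lemma coactionCounit_mul_coaction_comul (hρ : CC2 k H C ρ) (c : C) :
    (LinearMap.mul' k H).rTensor C ((TensorProduct.assoc k H H C).symm
      (TensorProduct.map (coactionCounit ρ) ρ (comul (R := k) c))) = ρ c := by
  have h := congrArg (((TensorProduct.lid k C).toLinearMap ∘ₗ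
    (counit : C →ₗ[k] k).rTensor C).lTensor H) (hρ c)
  have hcounit : ((TensorProduct.lid k C).toLinearMap ∘ₗ (counit : C →ₗ[k] k).rTensor C)
      ∘ₗ comul = LinearMap.id := by
    ext d
    simp [rTensor_counit_comul]
  rw [← LinearMap.lTensor_def, ← LinearMap.lTensor_comp_apply, hcounit, LinearMap.lTensor_id,
    LinearMap.id_apply] at h
  rw [h]
  generalize comul (R := k) c = u
  induction u using TensorProduct.induction_on with
  | zero => simp
  | add u u' hu hu' => simp_all
  | tmul c₁ c₂ =>
    simp only [TensorProduct.map_tmul, coactionCounit_apply]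
    generalize ρ c₁ = y
    generalize ρ c₂ = y'
    induction y using TensorProduct.induction_on with
    | zero => simp
    | add y₁ y₂ hy₁ hy₂ => simp_all [add_tmul]
    | tmul x d =>
      induction y' using TensorProduct.induction_on with
      | zero => simp
      | add y₁ y₂ hy₁ hy₂ => simp_all [tmul_add]
      | tmul x' d' => simp [mixHC, smul_tmul']

/-- `c₁⁽⁻¹⁾ c₂⁽⁻¹⁾ ε_C(c₂⁽⁰⁾) ⊗ c₁⁽⁰⁾ = ρ(c)`. -/
lemma lTensor_rid_counit_mixHC_map_comul (hρ : CC2 k H C ρ) (c : C) :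
    (((TensorProduct.rid k C).toLinearMap ∘ₗ (counit : C →ₗ[k] k).lTensor C).lTensor H)
      (mixHC k H C (TensorProduct.map ρ ρ (comul (R := k) c))) = ρ c := by
  have hcounit : ((TensorProduct.rid k C).toLinearMap ∘ₗ (counit : C →ₗ[k] k).lTensor C)
      ∘ₗ comul = LinearMap.id := by
    ext d
    simp [lTensor_counit_comul]
  rw [← hρ c, ← LinearMap.lTensor_def, ← LinearMap.lTensor_comp_apply, hcounit,
    LinearMap.lTensor_id, LinearMap.id_apply]

variable [Coalgebra k H]

lemma smashCounit_tmul (c : C) (h : H) :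
    smashCounit k H C ρ (c ⊗ₜ h) = counit (R := k) (coactionCounit ρ c * h) := by
  simp only [smashCounit, LinearMap.comp_apply, TensorProduct.map_tmul, coactionCounit_apply]
  generalize ρ c = y
  induction y using TensorProduct.induction_on with
  | zero => simp
  | add y y' hy hy' => simp_all [add_tmul, add_mul]
  | tmul x d => simp [mul_comm]

lemma epsT_coactionCounit (hρ : CC4 k H C ρ) (c : C) :
    epsT k H (coactionCounit ρ c) = coactionCounit ρ c := by
  refine Eq.trans ?_ (hρ c).symm
  rw [coactionCounit_apply]
  generalize ρ c = y
  induction y using TensorProduct.induction_on with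
  | zero => simp
  | add y y' hy hy' => simp_all
  | tmul x d => simp

lemma lTensor_coactionCounit_coaction (hρ : CC3 k H C ρ) (c : C) :
    (coactionCounit ρ).lTensor H (ρ c) = comul (R := k) (coactionCounit ρ c) := by
  have h := congrArg (((TensorProduct.rid k H).toLinearMap ∘ₗ
    (counit : C →ₗ[k] k).lTensor H).lTensor H) (hρ c)
  rw [← LinearMap.lTensor_def, ← LinearMap.lTensor_comp_apply] at h
  refine h.trans ?_
  rw [coactionCounit_apply]
  generalize ρ c = y
  induction y using TensorProduct.induction_on with
  | zero => simp
  | add y y' hy hy' => simp_all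
  | tmul x d =>
    simp only [TensorProduct.map_tmul, LinearMap.lTensor_tmul, TensorProduct.rid_tmul, map_smul]
    generalize comul (R := k) x = w
    induction w using TensorProduct.induction_on with
    | zero => simp
    | add w w' hw hw' => simp_all [add_tmul, smul_add]
    | tmul p q => simp [tmul_smul]

lemma lid_comp_map_smashCounit_comp_smashComul (hρ : CC2 k H C ρ) :
    (TensorProduct.lid k (C ⊗[k] H)).toLinearMap
        ∘ₗ TensorProduct.map (smashCounit k H C ρ) LinearMap.id ∘ₗ smashComul k H C ρ
      = smashP k H C ρ := by
  refine TensorProduct.ext' fun c h => ?_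
  rw [smashP_tmul, ← coactionCounit_mul_coaction_comul hρ c]
  simp only [smashComul, LinearMap.comp_apply, TensorProduct.map_tmul]
  generalize comul (R := k) c = u
  induction u using TensorProduct.induction_on with
  | zero => simp
  | add u u' hu hu' => simp_all [add_tmul]
  | tmul c₁ c₂ =>
    simp only [TensorProduct.map_tmul]
    generalize ρ c₂ = y
    induction y using TensorProduct.induction_on with
    | zero => simp
    | add y y' hy hy' => simp_all [tmul_add, add_tmul]
    | tmul x d =>
      simp only [TensorProduct.assoc_symm_tmul, LinearMap.rTensor_tmul, LinearMap.mul'_apply,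
        LinearMap.flip_apply, counitHit_apply]
      generalize comul (R := k) h = v
      induction v using TensorProduct.induction_on with
      | zero => simp
      | add v v' hv hv' => simp_all [tmul_add]
      | tmul a b => simp [smashCounit_tmul, tmul_smul]

lemma rid_map_smashCounit_smashComul_tmul
    (hmul : ∀ a b : H, comul (R := k) (a * b) = comul a * comul b) (hρ : CC3 k H C ρ)
    (c : C) (h : H) :
    TensorProduct.rid k (C ⊗[k] H)
        (TensorProduct.map LinearMap.id (smashCounit k H C ρ) (smashComul k H C ρ (c ⊗ₜ h)))
      = (LinearMap.mulRight k h ∘ₗ coactionCounit ρ).lTensor C (comul (R := k) c) := by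
  simp only [smashComul, LinearMap.comp_apply, TensorProduct.map_tmul, LinearEquiv.coe_coe]
  generalize comul (R := k) c = u
  induction u using TensorProduct.induction_on with
  | zero => simp
  | add u u' hu hu' => simp_all [add_tmul]
  | tmul c₁ c₂ =>
    have hcounit : coactionCounit ρ c₂ * h = TensorProduct.rid k H
        ((counit : H →ₗ[k] k).lTensor H ((coactionCounit ρ).lTensor H (ρ c₂) * comul h)) := by
      rw [lTensor_coactionCounit_coaction hρ, ← hmul, lTensor_counit_comul,
        TensorProduct.rid_tmul, one_smul]
    rw [TensorProduct.map_tmul, LinearMap.id_apply, LinearMap.lTensor_tmul,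
      LinearMap.comp_apply, LinearMap.mulRight_apply, hcounit]
    generalize ρ c₂ = y
    induction y using TensorProduct.induction_on with
    | zero => simp
    | add y y' hy hy' => simp_all [tmul_add, add_tmul, add_mul]
    | tmul x d =>
      simp only [TensorProduct.assoc_symm_tmul, LinearMap.lTensor_tmul]
      generalize comul (R := k) h = v
      induction v using TensorProduct.induction_on with
      | zero => simp
      | add v v' hv hv' => simp_all [tmul_add, mul_add]
      | tmul a b => simp [smashCounit_tmul, Algebra.TensorProduct.tmul_mul_tmul, tmul_smul]

/-- `r(c⁽⁰⁾) ((x c⁽⁻¹⁾) ⇀ h) = x r(c) ⇀ h`. -/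
lemma lift_mul_counitHit_lTensor_coactionCounit (hH : IsWeakBialgebra k H)
    (hρ₃ : CC3 k H C ρ) (hρ₄ : CC4 k H C ρ) (x h : H) (c : C) :
    TensorProduct.lift
        ((LinearMap.mul k H).flip ∘ₗ (counitHit k H).flip h ∘ₗ LinearMap.mulLeft k x)
        ((coactionCounit ρ).lTensor H (ρ c))
      = counitHit k H (x * coactionCounit ρ c) h := by
  rw [lTensor_coactionCounit_coaction hρ₃, lift_mul_counitHit_comul hH.1,
    ← epsT_coactionCounit hρ₄, counitHit_mul_of_comul_mul (comul_epsT_mul hH _ h)]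

/-- `(id ⊗ ε̂) Δ̃ (d ⊗ (x ⇀ h)) = d₁ ⊗ r(d₂) (x ⇀ h)`, extended linearly to `y = x ⊗ d`. -/
lemma rid_map_smashCounit_smashComul_comm_rTensor
    (hmul : ∀ a b : H, comul (R := k) (a * b) = comul a * comul b) (hρ : CC3 k H C ρ)
    (h : H) (y : H ⊗[k] C) :
    TensorProduct.rid k (C ⊗[k] H) (TensorProduct.map LinearMap.id (smashCounit k H C ρ)
        (smashComul k H C ρ (TensorProduct.comm k H C (((counitHit k H).flip h).rTensor C y))))
      = (TensorProduct.lift ((LinearMap.mul k H).flip ∘ₗ (counitHit k H).flip h)).lTensor C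
          (TensorProduct.leftComm k H C H
            (((coactionCounit ρ).lTensor C).lTensor H ((comul (R := k)).lTensor H y))) := by
  induction y using TensorProduct.induction_on with
  | zero => simp
  | add y y' hy hy' => simp_all
  | tmul x d =>
    simp only [LinearMap.rTensor_tmul, TensorProduct.comm_tmul, LinearMap.flip_apply,
      rid_map_smashCounit_smashComul_tmul hmul hρ, LinearMap.lTensor_tmul]
    generalize comul (R := k) d = w
    induction w using TensorProduct.induction_on with
    | zero => simp
    | add w w' hw hw' => simp_all [tmul_add]
    | tmul d₁ d₂ => simp

lemma rid_map_smashCounit_smashComul_smashP (hH : IsWeakBialgebra k H) (hρ₂ : CC2 k H C ρ)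
    (hρ₃ : CC3 k H C ρ) (hρ₄ : CC4 k H C ρ) (c : C) (h : H) :
    TensorProduct.rid k (C ⊗[k] H)
        (TensorProduct.map LinearMap.id (smashCounit k H C ρ)
          (smashComul k H C ρ (smashP k H C ρ (c ⊗ₜ h))))
      = smashP k H C ρ (c ⊗ₜ h) := by
  have hρ₂' : (comul (R := k)).lTensor H (ρ c) = mixHC k H C (TensorProduct.map ρ ρ (comul c)) :=
    hρ₂ c
  rw [smashP_tmul, rid_map_smashCounit_smashComul_comm_rTensor hH.1 hρ₃, hρ₂']
  conv_rhs => rw [← lTensor_rid_counit_mixHC_map_comul hρ₂ c]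
  generalize comul (R := k) c = u
  induction u using TensorProduct.induction_on with
  | zero => simp
  | add u u' hu hu' => simp_all
  | tmul c₁ c₂ =>
    rw [TensorProduct.map_tmul]
    generalize ρ c₁ = y
    induction y using TensorProduct.induction_on with
    | zero => simp
    | add y y' hy hy' => simp_all [add_tmul]
    | tmul x d =>
      have hleft : ∀ y : H ⊗[k] C,
          (TensorProduct.lift ((LinearMap.mul k H).flip ∘ₗ (counitHit k H).flip h)).lTensor C
              (TensorProduct.leftComm k H C H (((coactionCounit ρ).lTensor C).lTensor H
                (mixHC k H C ((x ⊗ₜ d) ⊗ₜ y))))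
            = d ⊗ₜ TensorProduct.lift ((LinearMap.mul k H).flip ∘ₗ (counitHit k H).flip h ∘ₗ
                LinearMap.mulLeft k x) ((coactionCounit ρ).lTensor H y) := by
        intro y
        induction y using TensorProduct.induction_on with
        | zero => simp
        | add y y' hy hy' => simp_all [tmul_add]
        | tmul x' d' => simp [mixHC]
      have hright : ∀ y : H ⊗[k] C, TensorProduct.comm k H C (((counitHit k H).flip h).rTensor C
            ((((TensorProduct.rid k C).toLinearMap ∘ₗ (counit : C →ₗ[k] k).lTensor C).lTensor H)
              (mixHC k H C ((x ⊗ₜ d) ⊗ₜ y))))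
          = d ⊗ₜ counitHit k H
              (x * TensorProduct.rid k H ((counit : C →ₗ[k] k).lTensor H y)) h := by
        intro y
        induction y using TensorProduct.induction_on with
        | zero => simp
        | add y y' hy hy' => simp_all [tmul_add, mul_add]
        | tmul x' d' => simp [mixHC]
      rw [hleft, hright, ← coactionCounit_apply,
        lift_mul_counitHit_lTensor_coactionCounit hH hρ₃ hρ₄]

end Comodule

end WeakSmashCoproduct

noncomputable section
variable (k : Type*) [Field k]
variable (H : Type*) [Ring H] [Algebra k H] [Coalgebra k H]
variable (C : Type*) [AddCommGroup C] [Module k C] [Coalgebra k C]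

/-- `ε̂` is a counit for `Δ̃` on the weak smash coproduct `C × H`. -/
theorem smashCounit_counit (S : H →ₗ[k] H) (hH : IsWeakHopfAlgebra k H S)
    (ρ : C →ₗ[k] H ⊗[k] C) (hρ : IsComoduleCoalgebra k H C ρ) :
    ∀ (c : C) (h : H),
      TensorProduct.lid k (C ⊗[k] H)
          (TensorProduct.map (smashCounit k H C ρ)
            (LinearMap.id : C ⊗[k] H →ₗ[k] C ⊗[k] H)
            (smashComul k H C ρ (smashP k H C ρ (c ⊗ₜ[k] h))))
        = smashP k H C ρ (c ⊗ₜ[k] h)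
      ∧ TensorProduct.rid k (C ⊗[k] H)
          (TensorProduct.map (LinearMap.id : C ⊗[k] H →ₗ[k] C ⊗[k] H)
            (smashCounit k H C ρ)
            (smashComul k H C ρ (smashP k H C ρ (c ⊗ₜ[k] h))))
        = smashP k H C ρ (c ⊗ₜ[k] h) := by
  obtain ⟨hB, -⟩ := hH
  obtain ⟨-, hρ₂, hρ₃, hρ₄⟩ := hρ
  intro c h
  refine ⟨?_, WeakSmashCoproduct.rid_map_smashCounit_smashComul_smashP hB hρ₂ hρ₃ hρ₄ c h⟩
  calc _ = smashP k H C ρ (smashP k H C ρ (c ⊗ₜ[k] h)) :=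
        LinearMap.congr_fun (WeakSmashCoproduct.lid_comp_map_smashCounit_comp_smashComul hρ₂) _
    _ = smashP k H C ρ (c ⊗ₜ[k] h) :=
        LinearMap.congr_fun (WeakSmashCoproduct.isIdempotentElem_smashP hB.1 hρ₃).eq _

end
end

section
/- Let H be a commutative weak Hopf algebra over a field k and let C be a weak bialgebra over k which is a left H-comodule bialgebra via ρ. Then for all b,c∈C and h,k∈H, P(c⊗h)·P(b⊗k)=P(cb⊗hk) in the componentwise algebra C⊗H; i.e. (c×h)(b×k)=cb×hk. -/
open TensorProduct

noncomputable section
variable (k : Type*) [Field k]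
variable (H : Type*) [Ring H] [Algebra k H] [Coalgebra k H]
variable (C : Type*) [Ring C] [Algebra k C] [Coalgebra k C]

/-- `C` is a left `H`-comodule bialgebra via `ρ`. -/
def IsComoduleBialgebra (ρ : C →ₗ[k] H ⊗[k] C) : Prop :=
  IsComoduleCoalgebra k H C ρ ∧ (∀ c d : C, ρ (c * d) = ρ c * ρ d) ∧
  TensorProduct.map (epsS k H) (LinearMap.id : C →ₗ[k] C) (ρ 1) = ρ 1

/-- The antipode candidate `Ŝ(c ⊗ h) = P(S_C(c⁽⁰⁾) ⊗ S_H(c⁽⁻¹⁾h))` on the smash coproduct. -/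
def smashS (ρ : C →ₗ[k] H ⊗[k] C) (SC : C →ₗ[k] C) (SH : H →ₗ[k] H) :
    C ⊗[k] H →ₗ[k] C ⊗[k] H :=
  smashP k H C ρ
  ∘ₗ TensorProduct.map SC (SH ∘ₗ LinearMap.mul' k H)
  ∘ₗ (TensorProduct.assoc k C H H).toLinearMap
  ∘ₗ TensorProduct.map (TensorProduct.comm k H C).toLinearMap (LinearMap.id : H →ₗ[k] H)
  ∘ₗ TensorProduct.map ρ (LinearMap.id : H →ₗ[k] H)

end


/-!
For commutative `H` the weak bialgebra axioms give `ε(y h₁) h₂ = ε_t(y) h`, so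
`P(c ⊗ h) = c⁽⁰⁾ ⊗ ε_t(c⁽⁻¹⁾) h = (c⁽⁰⁾ ⊗ ε_t(c⁽⁻¹⁾)) (1 ⊗ h)`. Since `b ↼ φ = φ(b₁) b₂` is a
right action of the convolution algebra `H*` and axiom (ii) says that
`ε(y ·) * ε(· z) = ε(y · z)`, the map `ε_t` is multiplicative, hence so is
`c ↦ c⁽⁰⁾ ⊗ ε_t(c⁽⁻¹⁾)` (as `ρ` is). As `1 ⊗ h` is central, the product formula follows.
-/

section Hit

variable {k H : Type*} [CommSemiring k] [AddCommMonoid H] [Module k H] [Coalgebra k H]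

/-- The right hit action `b ↼ φ = φ(b₁) b₂` of the dual algebra `H*` on `H`. -/
def hit (φ : H →ₗ[k] k) : H →ₗ[k] H :=
  (TensorProduct.lid k H).toLinearMap ∘ₗ φ.rTensor H ∘ₗ Coalgebra.comul

lemma hit_counit (b : H) : hit (Coalgebra.counit : H →ₗ[k] k) b = b := by
  simp [hit]

lemma hit_hit (φ ψ : H →ₗ[k] k) (b : H) :
    hit ψ (hit φ b)
      = hit ((TensorProduct.lid k k).toLinearMap ∘ₗ TensorProduct.map φ ψ ∘ₗ Coalgebra.comul)
          b := by
  have natural : ∀ u : H ⊗[k] H, hit ψ (TensorProduct.lid k H (φ.rTensor H u))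
      = TensorProduct.lid k H (φ.rTensor H ((hit ψ).lTensor H u)) := by
    intro u
    induction u using TensorProduct.induction_on with
    | zero => simp
    | tmul a c => simp
    | add u v hu hv => simp only [map_add, hu, hv]
  have reassoc : ∀ w : (H ⊗[k] H) ⊗[k] H,
      TensorProduct.lid k H (φ.rTensor H
          (((TensorProduct.lid k H).toLinearMap ∘ₗ ψ.rTensor H).lTensor H
            (TensorProduct.assoc k H H H w)))
        = TensorProduct.lid k H
            (((TensorProduct.lid k k).toLinearMap ∘ₗ TensorProduct.map φ ψ).rTensor H w) := by
    intro w
    induction w using TensorProduct.induction_on with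
    | zero => simp
    | tmul x d =>
      induction x using TensorProduct.induction_on with
      | zero => simp
      | tmul a c => simp [smul_smul, mul_comm]
      | add x y hx hy => simp only [TensorProduct.add_tmul, map_add, hx, hy]
    | add u v hu hv => simp only [map_add, hu, hv]
  calc hit ψ (hit φ b)
      = TensorProduct.lid k H (φ.rTensor H ((hit ψ).lTensor H (Coalgebra.comul b))) := natural _
    _ = TensorProduct.lid k H (φ.rTensor H
          (((TensorProduct.lid k H).toLinearMap ∘ₗ ψ.rTensor H).lTensor H
            (TensorProduct.assoc k H H H (Coalgebra.comul.rTensor H (Coalgebra.comul b))))) := by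
        rw [Coalgebra.coassoc_apply, ← LinearMap.lTensor_comp_apply]; rfl
    _ = _ := by rw [reassoc, ← LinearMap.rTensor_comp_apply]; rfl

end Hit

section WeakBialgebra

variable {k H : Type*} [Field k] [Ring H] [Algebra k H] [Coalgebra k H]

lemma epsPair_comp_comul (hH : IsWeakBialgebra k H) (a c : H) :
    epsPair k H a c ∘ₗ Coalgebra.comul
      = Coalgebra.counit ∘ₗ LinearMap.mulLeft k a ∘ₗ LinearMap.mulRight k c := by
  ext b
  simp [← hH.2.1, mul_assoc]

lemma hit_mul (hH : IsWeakBialgebra k H) (φ : H →ₗ[k] k) (a : H) {h : H} {ι : Type*}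
    (r : Coalgebra.Repr k h ι) :
    hit φ (a * h) = ∑ i ∈ r.index, hit (φ ∘ₗ LinearMap.mulRight k (r.left i)) a * r.right i := by
  have pure : ∀ (u : H ⊗[k] H) (p q : H),
      TensorProduct.lid k H (φ.rTensor H (u * p ⊗ₜ[k] q))
        = TensorProduct.lid k H ((φ ∘ₗ LinearMap.mulRight k p).rTensor H u) * q := by
    intro u p q
    induction u using TensorProduct.induction_on with
    | zero => simp
    | tmul x z => simp
    | add u v hu hv => simp only [add_mul, map_add, hu, hv]
  simp only [hit, LinearMap.coe_comp, Function.comp_apply, LinearEquiv.coe_coe, hH.1, ← r.eq,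
    Finset.mul_sum, map_sum, pure]

lemma hit_counit_comp_mulLeft_mul (hH : IsWeakBialgebra k H) (y b h : H) :
    hit (Coalgebra.counit ∘ₗ LinearMap.mulLeft k y) (b * h)
      = hit (Coalgebra.counit ∘ₗ LinearMap.mulLeft k y) b * h := by
  -- `x h = ε(x₁ h₁) x₂ h₂` for `x = b ↼ ε(y ·)`; axiom (ii) merges the two hits into one.
  let r := Coalgebra.Repr.arbitrary k h
  calc hit (Coalgebra.counit ∘ₗ LinearMap.mulLeft k y) (b * h)
      = ∑ i ∈ r.index, hit (Coalgebra.counit ∘ₗ LinearMap.mulRight k (r.left i))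
          (hit (Coalgebra.counit ∘ₗ LinearMap.mulLeft k y) b) * r.right i := by
        rw [hit_mul hH _ b r]
        refine Finset.sum_congr rfl fun i _ => ?_
        rw [hit_hit, ← LinearMap.comp_assoc, ← epsPair, epsPair_comp_comul hH]
        rfl
    _ = _ := by rw [← hit_mul hH _ _ r, hit_counit]

lemma epsT_one : epsT k H 1 = 1 := by
  change TensorProduct.lid k H (Coalgebra.counit.rTensor H (Coalgebra.comul 1 * 1 ⊗ₜ[k] 1)) = 1
  rw [← Algebra.TensorProduct.one_def, mul_one, Coalgebra.rTensor_counit_comul,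
    TensorProduct.lid_tmul, one_smul]

lemma epsT_eq_hit (hcomm : ∀ x y : H, x * y = y * x) (y : H) :
    epsT k H y = hit (Coalgebra.counit ∘ₗ LinearMap.mulLeft k y) 1 := by
  have swap : ∀ u : H ⊗[k] H,
      TensorProduct.lid k H (TensorProduct.map Coalgebra.counit LinearMap.id (u * y ⊗ₜ[k] 1))
        = TensorProduct.lid k H ((Coalgebra.counit ∘ₗ LinearMap.mulLeft k y).rTensor H u) := by
    intro u
    induction u using TensorProduct.induction_on with
    | zero => simp
    | tmul a c => simp [hcomm a y]
    | add u v hu hv => simp only [add_mul, map_add, hu, hv]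
  exact swap _

lemma hit_counit_comp_mulLeft (hH : IsWeakBialgebra k H) (hcomm : ∀ x y : H, x * y = y * x)
    (y h : H) : hit (Coalgebra.counit ∘ₗ LinearMap.mulLeft k y) h = epsT k H y * h := by
  rw [epsT_eq_hit hcomm, ← hit_counit_comp_mulLeft_mul hH, one_mul]

lemma epsT_mul (hH : IsWeakBialgebra k H) (hcomm : ∀ x y : H, x * y = y * x) (x y : H) :
    epsT k H (x * y) = epsT k H x * epsT k H y := by
  have mulLeft_eq_mulRight : Coalgebra.counit ∘ₗ LinearMap.mulLeft k x
      = (Coalgebra.counit : H →ₗ[k] k) ∘ₗ LinearMap.mulRight k x := by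
    ext z; simp [hcomm x z]
  rw [← hit_counit_comp_mulLeft hH hcomm, epsT_eq_hit hcomm y, mulLeft_eq_mulRight, hit_hit,
    ← LinearMap.comp_assoc, ← epsPair, epsPair_comp_comul hH, epsT_eq_hit hcomm]
  congr 2
  ext z; simp [hcomm x y, hcomm z x]

def epsTAlgHom (hH : IsWeakBialgebra k H) (hcomm : ∀ x y : H, x * y = y * x) : H →ₐ[k] H :=
  AlgHom.ofLinearMap (epsT k H) epsT_one (epsT_mul hH hcomm)

end WeakBialgebra

section Smash

variable {k H C : Type*} [Field k] [Ring H] [Algebra k H] [Coalgebra k H] [Ring C] [Algebra k C]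

lemma smashP_tmul (hH : IsWeakBialgebra k H) (hcomm : ∀ x y : H, x * y = y * x)
    (ρ : C →ₗ[k] H ⊗[k] C) (c : C) (h : H) :
    smashP k H C ρ (c ⊗ₜ[k] h)
      = Algebra.TensorProduct.comm k H C
          (Algebra.TensorProduct.map (epsTAlgHom hH hcomm) (AlgHom.id k C) (ρ c))
        * (1 ⊗ₜ[k] h) := by
  have pure : ∀ (a : H) (x : C) (v : H ⊗[k] H),
      TensorProduct.lid k (C ⊗[k] H)
          (TensorProduct.map (Coalgebra.counit ∘ₗ LinearMap.mul' k H) LinearMap.id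
            (TensorProduct.tensorTensorTensorComm k H C H H ((a ⊗ₜ[k] x) ⊗ₜ[k] v)))
        = x ⊗ₜ[k]
            TensorProduct.lid k H ((Coalgebra.counit ∘ₗ LinearMap.mulLeft k a).rTensor H v) := by
    intro a x v
    induction v using TensorProduct.induction_on with
    | zero => simp
    | tmul p q => simp [TensorProduct.tmul_smul]
    | add v w hv hw => simp only [TensorProduct.tmul_add, map_add, hv, hw]
  simp only [smashP, LinearMap.coe_comp, Function.comp_apply, LinearEquiv.coe_coe,
    TensorProduct.map_tmul]
  induction ρ c using TensorProduct.induction_on with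
  | zero => simp
  | tmul a x =>
    rw [pure]
    change x ⊗ₜ[k] hit _ h = _
    simp [hit_counit_comp_mulLeft hH hcomm, epsTAlgHom]
  | add u v hu hv => simp only [TensorProduct.add_tmul, map_add, add_mul, hu, hv]

end Smash

lemma commute_one_tmul {k A B : Type*} [CommRing k] [Ring A] [Algebra k A] [Ring B] [Algebra k B]
    {b : B} (hb : ∀ y : B, Commute b y) (z : A ⊗[k] B) : Commute ((1 : A) ⊗ₜ[k] b) z := by
  induction z using TensorProduct.induction_on with
  | zero => exact Commute.zero_right _
  | tmul x y => exact (Commute.one_left x).tmul (hb y)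
  | add u v hu hv => exact hu.add_right hv

noncomputable section
variable (k : Type*) [Field k]
variable (H : Type*) [Ring H] [Algebra k H] [Coalgebra k H]
variable (C : Type*) [Ring C] [Algebra k C] [Coalgebra k C]

theorem smashP_mul (S : H →ₗ[k] H) (hcomm : ∀ x y : H, x * y = y * x)
    (hH : IsWeakHopfAlgebra k H S)
    (ρ : C →ₗ[k] H ⊗[k] C) (hρ : IsComoduleBialgebra k H C ρ) :
    ∀ (b c : C) (h l : H),
      smashP k H C ρ (c ⊗ₜ[k] h) * smashP k H C ρ (b ⊗ₜ[k] l)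
        = smashP k H C ρ ((c * b) ⊗ₜ[k] (h * l)) := by
  intro b c h l
  let twist := (Algebra.TensorProduct.comm k H C).toAlgHom.comp
    (Algebra.TensorProduct.map (epsTAlgHom hH.1 hcomm) (AlgHom.id k C))
  calc smashP k H C ρ (c ⊗ₜ[k] h) * smashP k H C ρ (b ⊗ₜ[k] l)
      = twist (ρ c) * (1 ⊗ₜ[k] h) * (twist (ρ b) * (1 ⊗ₜ[k] l)) := by
        rw [smashP_tmul hH.1 hcomm, smashP_tmul hH.1 hcomm]; rfl
    _ = twist (ρ c * ρ b) * (1 ⊗ₜ[k] (h * l)) := by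
        rw [(commute_one_tmul (hcomm h) _).mul_mul_mul_comm, map_mul,
          Algebra.TensorProduct.tmul_mul_tmul, one_mul]
    _ = smashP k H C ρ ((c * b) ⊗ₜ[k] (h * l)) := by
        rw [← hρ.2.1, smashP_tmul hH.1 hcomm]; rfl

end
end
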